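/- arXiv:2208.00330 — 13 statements merged into one kernel-verified Lean document; each statement's English description precedes it below -/
import Mathlib

section
/- Let P be an N×N real matrix with nonnegative entries whose row sums are all at most 1, let c : Fin N → ℝ be componentwise nonnegative, and suppose x : Fin N → ℝ satisfies c + P·x ≤ x componentwise. Then the sequence of partial sums S_k = ∑_{i=0}^{k-1} P^i·c is componentwise nondecreasing and converges componentwise to some J : Fin N → ℝ; moreover, if the vectors P^k·x converge componentwise to 0 as k → ∞, then 0 ≤ J ≤ x componentwise (in particular x ≥ 0). -/
open Filter Topology

theorem stmt_0 (N : ℕ) (P : Matrix (Fin N) (Fin N) ℝ) (c x : Fin N → ℝ)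
    (hP_nonneg : ∀ i j, 0 ≤ P i j)
    (hP_rows : ∀ i, ∑ j, P i j ≤ 1)
    (hc : ∀ i, 0 ≤ c i)
    (hx : ∀ i, c i + P.mulVec x i ≤ x i) :
    ∃ J : Fin N → ℝ,
      (∀ s, Monotone (fun k => ∑ i ∈ Finset.range k, (P ^ i).mulVec c s)) ∧
      (∀ s, Tendsto (fun k => ∑ i ∈ Finset.range k, (P ^ i).mulVec c s) atTop (𝓝 (J s))) ∧
      ((∀ s, Tendsto (fun k => (P ^ k).mulVec x s) atTop (𝓝 0)) →
        ∀ s, 0 ≤ J s ∧ J s ≤ x s) := by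
  -- powers of P have nonnegative entries
  have hpow_nonneg : ∀ k i j, 0 ≤ (P ^ k) i j := by
    intro k
    induction k with
    | zero => intro i j; simp [Matrix.one_apply]; positivity
    | succ k ih =>
      intro i j
      rw [pow_succ, Matrix.mul_apply]
      exact Finset.sum_nonneg fun l _ => mul_nonneg (ih i l) (hP_nonneg l j)
  -- mulVec by a power of P is monotone
  have hmono : ∀ k (u v : Fin N → ℝ), (∀ i, u i ≤ v i) →
      ∀ i, (P ^ k).mulVec u i ≤ (P ^ k).mulVec v i := by
    intro k u v huv i
    unfold Matrix.mulVec dotProduct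
    exact Finset.sum_le_sum fun j _ =>
      mul_le_mul_of_nonneg_left (huv j) (hpow_nonneg k i j)
  -- (P^k c) is nonnegative
  have hPc_nonneg : ∀ k i, 0 ≤ (P ^ k).mulVec c i := by
    intro k i
    unfold Matrix.mulVec dotProduct
    exact Finset.sum_nonneg fun j _ => mul_nonneg (hpow_nonneg k i j) (hc j)
  -- monotonicity of partial sums
  have hmonS : ∀ s, Monotone (fun k => ∑ i ∈ Finset.range k, (P ^ i).mulVec c s) := by
    intro s
    apply monotone_nat_of_le_succ
    intro k
    rw [Finset.sum_range_succ]
    exact le_add_of_nonneg_right (hPc_nonneg k s)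
  -- key inequality: S_k + P^k x ≤ x
  have hkey : ∀ k s, (∑ i ∈ Finset.range k, (P ^ i).mulVec c s) + (P ^ k).mulVec x s ≤ x s := by
    intro k
    induction k with
    | zero => intro s; simp [Matrix.mulVec_one]
    | succ k ih =>
      intro s
      have h1 : ∀ i, (P ^ k).mulVec (fun j => c j + P.mulVec x j) i ≤ (P ^ k).mulVec x i :=
        hmono k _ _ hx
      have h2 : (P ^ k).mulVec (fun j => c j + P.mulVec x j) s
          = (P ^ k).mulVec c s + (P ^ (k+1)).mulVec x s := by
        have : (fun j => c j + P.mulVec x j) = c + P.mulVec x := rfl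
        rw [this, Matrix.mulVec_add, pow_succ, Matrix.mulVec_mulVec]
        rfl
      have := h1 s
      rw [h2] at this
      calc (∑ i ∈ Finset.range (k+1), (P ^ i).mulVec c s) + (P ^ (k+1)).mulVec x s
          = (∑ i ∈ Finset.range k, (P ^ i).mulVec c s)
            + ((P ^ k).mulVec c s + (P ^ (k+1)).mulVec x s) := by
            rw [Finset.sum_range_succ]; ring
        _ ≤ (∑ i ∈ Finset.range k, (P ^ i).mulVec c s) + (P ^ k).mulVec x s := by linarith
        _ ≤ x s := ih s
  -- lower bound for P^k x: entries of P^k are ≤ 1, so P^k x ≥ -∑ |x j|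
  have hbound : ∀ k s, -(∑ j, |x j|) ≤ (P ^ k).mulVec x s := by
    intro k s
    have hrow : ∀ k i, ∑ j, (P ^ k) i j ≤ 1 := by
      intro k
      induction k with
      | zero => intro i; simp [Matrix.one_apply]
      | succ k ih =>
        intro i
        rw [pow_succ]
        calc ∑ j, (P ^ k * P) i j = ∑ l, (P ^ k) i l * (∑ j, P l j) := by
              simp_rw [Matrix.mul_apply, Finset.mul_sum]
              rw [Finset.sum_comm]
          _ ≤ ∑ l, (P ^ k) i l * 1 :=
              Finset.sum_le_sum fun l _ =>
                mul_le_mul_of_nonneg_left (hP_rows l) (hpow_nonneg k i l)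
          _ ≤ 1 := by simpa using ih i
    have hentry : ∀ j, (P ^ k) s j ≤ 1 := by
      intro j
      calc (P ^ k) s j ≤ ∑ l, (P ^ k) s l :=
            Finset.single_le_sum (fun l _ => hpow_nonneg k s l) (Finset.mem_univ j)
        _ ≤ 1 := hrow k s
    calc -(∑ j, |x j|) = ∑ j, -(|x j|) := by rw [Finset.sum_neg_distrib]
      _ ≤ ∑ j, (P ^ k) s j * x j := by
          apply Finset.sum_le_sum
          intro j _
          rcases le_or_gt 0 (x j) with h | h
          · calc -(|x j|) ≤ 0 := neg_nonpos_of_nonneg (abs_nonneg _)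
              _ ≤ (P ^ k) s j * x j := mul_nonneg (hpow_nonneg k s j) h
          · calc -(|x j|) = x j := by rw [abs_of_neg h]; ring
              _ = 1 * x j := (one_mul _).symm
              _ ≤ (P ^ k) s j * x j :=
                mul_le_mul_of_nonpos_right (hentry j) h.le
      _ = (P ^ k).mulVec x s := rfl
  -- partial sums are bounded above
  have hbdd : ∀ s, BddAbove (Set.range (fun k => ∑ i ∈ Finset.range k, (P ^ i).mulVec c s)) := by
    intro s
    refine ⟨x s + ∑ j, |x j|, ?_⟩
    rintro _ ⟨k, rfl⟩
    have := hkey k s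
    have := hbound k s
    simp only
    linarith
  refine ⟨fun s => ⨆ k, ∑ i ∈ Finset.range k, (P ^ i).mulVec c s, hmonS, ?_, ?_⟩
  · intro s
    exact tendsto_atTop_ciSup (hmonS s) (hbdd s)
  · intro htend s
    constructor
    · have h0 : (0:ℝ) = ∑ i ∈ Finset.range 0, (P ^ i).mulVec c s := by simp
      rw [h0]
      exact le_ciSup (hbdd s) 0
    · have hlim := tendsto_atTop_ciSup (hmonS s) (hbdd s)
      have hlim2 : Tendsto (fun k => x s - (P ^ k).mulVec x s) atTop (𝓝 (x s - 0)) :=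
        Tendsto.sub tendsto_const_nhds (htend s)
      have := le_of_tendsto_of_tendsto' hlim hlim2 (fun k => by have := hkey k s; linarith)
      simpa using this
end

section
/- Let P be an N×N real matrix such that the matrix powers P^k converge entrywise to the zero matrix as k → ∞, and let c : Fin N → ℝ. Then I − P is invertible, the affine map L x = c + P·x has exactly one fixed point, namely J = (I − P)⁻¹·c, and for every starting vector x : Fin N → ℝ the iterates L^k x converge componentwise to J as k → ∞. -/
open Filter Topology

theorem stmt_1 (N : ℕ) (P : Matrix (Fin N) (Fin N) ℝ) (c : Fin N → ℝ)
    (hP : ∀ i j, Tendsto (fun k => (P ^ k) i j) atTop (𝓝 0)) :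
    IsUnit (1 - P) ∧
    (∀ x : Fin N → ℝ, c + P.mulVec x = x ↔ x = (1 - P)⁻¹.mulVec c) ∧
    (∀ x : Fin N → ℝ, ∀ s,
      Tendsto (fun k => (fun y => c + P.mulVec y)^[k] x s) atTop
        (𝓝 ((1 - P)⁻¹.mulVec c s))) := by
  -- entrywise limit of mulVec with a fixed matrix prefactor
  have hmvz : ∀ (v : Fin N → ℝ) (s : Fin N),
      Tendsto (fun k => ((P ^ k).mulVec v) s) atTop (𝓝 0) := by
    intro v s
    have : Tendsto (fun k => ∑ j, (P ^ k) s j * v j) atTop (𝓝 (∑ j : Fin N, 0)) := by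
      apply tendsto_finset_sum
      intro j _
      simpa using (hP s j).mul_const (v j)
    simpa [Matrix.mulVec, dotProduct] using this
  -- 1 - P is a unit
  have hdet : IsUnit (1 - P).det := by
    rw [isUnit_iff_ne_zero]
    intro h0
    obtain ⟨v, hv, hv0⟩ := (Matrix.exists_mulVec_eq_zero_iff).2 h0
    have hPv : P.mulVec v = v := by
      have := hv0
      rw [Matrix.sub_mulVec, Matrix.one_mulVec, sub_eq_zero] at this
      exact this.symm
    have hpow : ∀ k, (P ^ k).mulVec v = v := by
      intro k
      induction k with
      | zero => simp [Matrix.one_mulVec]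
      | succ n ih =>
        rw [pow_succ, ← Matrix.mulVec_mulVec, hPv, ih]
    have : v = 0 := by
      funext s
      have h1 : Tendsto (fun k => ((P ^ k).mulVec v) s) atTop (𝓝 (v s)) := by
        simp [hpow]
      exact tendsto_nhds_unique h1 (hmvz v s)
    exact hv this
  have hU : IsUnit (1 - P) := (Matrix.isUnit_iff_isUnit_det _).2 hdet
  have hinv : (1 - P)⁻¹ * (1 - P) = 1 := Matrix.nonsing_inv_mul _ hdet
  have hinv' : (1 - P) * (1 - P)⁻¹ = 1 := Matrix.mul_nonsing_inv _ hdet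
  refine ⟨hU, ?_, ?_⟩
  · intro x
    constructor
    · intro h
      have h1 : (1 - P).mulVec x = c := by
        rw [Matrix.sub_mulVec, Matrix.one_mulVec]
        exact (eq_sub_of_add_eq h).symm
      calc x = (1 : Matrix (Fin N) (Fin N) ℝ).mulVec x := by rw [Matrix.one_mulVec]
        _ = ((1 - P)⁻¹ * (1 - P)).mulVec x := by rw [hinv]
        _ = (1 - P)⁻¹.mulVec c := by rw [← Matrix.mulVec_mulVec, h1]
    · intro h
      subst h
      have h1 : (1 - P).mulVec ((1 - P)⁻¹.mulVec c) = c := by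
        rw [Matrix.mulVec_mulVec, hinv', Matrix.one_mulVec]
      rw [Matrix.sub_mulVec, Matrix.one_mulVec] at h1
      set J := (1 - P)⁻¹.mulVec c with hJ
      rw [← h1]; abel
  · intro x s
    -- iterate formula
    have hiter : ∀ k, (fun y => c + P.mulVec y)^[k] x =
        (∑ i ∈ Finset.range k, P ^ i).mulVec c + (P ^ k).mulVec x := by
      intro k
      induction k with
      | zero => simp [Matrix.one_mulVec]
      | succ n ih =>
        have hsum : (∑ i ∈ Finset.range (n + 1), P ^ i)
            = 1 + P * ∑ i ∈ Finset.range n, P ^ i := by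
          rw [geom_sum_succ, add_comm]
        rw [Function.iterate_succ_apply', ih, hsum]
        simp only [Matrix.mulVec_add, Matrix.mulVec_mulVec, Matrix.add_mulVec,
          Matrix.one_mulVec, pow_succ']
        abel
    have hS : ∀ k, (∑ i ∈ Finset.range k, P ^ i) = (1 - P)⁻¹ * (1 - P ^ k) := by
      intro k
      have h1 : (1 - P) * (∑ i ∈ Finset.range k, P ^ i) = 1 - P ^ k := by
        have := mul_geom_sum P k
        calc (1 - P) * (∑ i ∈ Finset.range k, P ^ i)
            = -((P - 1) * ∑ i ∈ Finset.range k, P ^ i) := by noncomm_ring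
          _ = 1 - P ^ k := by rw [this]; abel
      calc (∑ i ∈ Finset.range k, P ^ i)
          = ((1 - P)⁻¹ * (1 - P)) * (∑ i ∈ Finset.range k, P ^ i) := by rw [hinv, one_mul]
        _ = (1 - P)⁻¹ * (1 - P ^ k) := by rw [mul_assoc, h1]
    have heq : ∀ k, (fun y => c + P.mulVec y)^[k] x s =
        ((1 - P)⁻¹.mulVec c) s - ((1 - P)⁻¹.mulVec ((P ^ k).mulVec c)) s
          + ((P ^ k).mulVec x) s := by
      intro k
      rw [hiter k, hS k, ← Matrix.mulVec_mulVec, Matrix.sub_mulVec, Matrix.one_mulVec,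
        Matrix.mulVec_sub]
      simp [Pi.add_apply, Pi.sub_apply]
    have h2 : Tendsto (fun k => ((1 - P)⁻¹.mulVec ((P ^ k).mulVec c)) s) atTop (𝓝 0) := by
      have : Tendsto (fun k => ∑ i, (1 - P)⁻¹ s i * ((P ^ k).mulVec c) i) atTop
          (𝓝 (∑ i : Fin N, 0)) := by
        apply tendsto_finset_sum
        intro i _
        simpa using (hmvz c i).const_mul ((1 - P)⁻¹ s i)
      simpa [Matrix.mulVec, dotProduct] using this
    have h3 := hmvz x s
    have : Tendsto (fun k => ((1 - P)⁻¹.mulVec c) s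
        - ((1 - P)⁻¹.mulVec ((P ^ k).mulVec c)) s + ((P ^ k).mulVec x) s) atTop
        (𝓝 (((1 - P)⁻¹.mulVec c) s - 0 + 0)) :=
      ((tendsto_const_nhds.sub h2).add h3)
    simp only [sub_zero, add_zero] at this
    exact this.congr (fun k => (heq k).symm)
end

section
/- Consider a stochastic shortest path model with finite state space Fin N (N ≥ 1), a nonempty finite action set A s for each state s, costs c : (s : Fin N) → A s → ℝ, and transitions P : (s : Fin N) → A s → Fin N → ℝ with P s a s' ≥ 0 and ∑_{s'} P s a s' ≤ 1 for all s, a. Suppose every stationary policy is proper, i.e., for every π : (s : Fin N) → A s, every row of the N-th matrix power of P_π (the matrix with entries (P_π)_{s,s'} = P s (π s) s') has sum strictly less than 1. Then the optimal Bellman operator U, defined by (U x) s = min_{a ∈ A s} (c s a + ∑_{s'} P s a s' · x s'), is a contraction in a weighted supremum norm: there exist weights ω : Fin N → ℝ with 0 < ω s < 1 for all s and a constant γ ∈ (0,1) such that for all x, y : Fin N → ℝ, max_s (|(U x) s − (U y) s| / ω s) ≤ γ · max_s (|x s − y s| / ω s). -/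
/-!
Let `Q v = max_a P_a v` (`maxSurvival`) and `u_n = Qⁿ 1` (`survival`), the largest probability,
over all (possibly non-stationary) policies, of not having reached the goal within `n` steps. The
`u_n` decrease to a fixed point `v` of `Q`. A stationary policy `π` attaining the maxima in `Q v`
has `v = P_π v`, hence `v = P_πᵏ v` for every `k`, and properness of `π` forces `v = 0`. So
`u_m ≤ 1/2` for some `m ≥ 1`, and the weight `w = u_0 + ⋯ + u_{m-1}` satisfies
`P_a w ≤ w + u_m - 1 ≤ w - 1/2`, which with `1 ≤ w ≤ m` gives `P_a w ≤ (1 - 1/(2m)) w` for every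
action `a`. This makes the Bellman operator a `(1 - 1/(2m))`-contraction in the `w`-weighted sup
norm; rescaling `w` puts the weights in `(0, 1)`.
-/

open Matrix Filter Topology Finset

section NonnegMatrix

variable {n : Type*} [Fintype n] {M : Matrix n n ℝ}

theorem Matrix.mulVec_mono_of_nonneg (hM : ∀ i, 0 ≤ M i) {v w : n → ℝ} (h : v ≤ w) :
    M *ᵥ v ≤ M *ᵥ w :=
  fun i => dotProduct_le_dotProduct_of_nonneg_left h (hM i)

variable [DecidableEq n]

theorem Matrix.pow_row_nonneg (hM : ∀ i, 0 ≤ M i) (k : ℕ) (i : n) : 0 ≤ (M ^ k) i := by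
  induction k generalizing i with
  | zero => intro j; by_cases h : i = j <;> simp [h]
  | succ k ih =>
    intro j
    rw [pow_succ', Matrix.mul_apply]
    exact sum_nonneg fun l _ => mul_nonneg (hM i l) (ih l j)

theorem Matrix.le_pow_mulVec_of_le_mulVec (hM : ∀ i, 0 ≤ M i) {v : n → ℝ}
    (hv : v ≤ M *ᵥ v) (k : ℕ) : v ≤ (M ^ k) *ᵥ v := by
  induction k with
  | zero => simp
  | succ k ih =>
    calc v ≤ M *ᵥ v := hv
      _ ≤ M *ᵥ ((M ^ k) *ᵥ v) := mulVec_mono_of_nonneg hM ih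
      _ = (M ^ (k + 1)) *ᵥ v := by rw [mulVec_mulVec, pow_succ']

end NonnegMatrix

theorem Matrix.nonpos_of_le_mulVec {n : Type*} [Fintype n] {M : Matrix n n ℝ}
    (hM : ∀ i, 0 ≤ M i) (hrow : ∀ i, ∑ j, M i j < 1) {v : n → ℝ} (hv : v ≤ M *ᵥ v) : v ≤ 0 := by
  intro i
  have : Nonempty n := ⟨i⟩
  obtain ⟨i₀, hi₀⟩ := Finite.exists_max v
  suffices v i₀ ≤ 0 from (hi₀ i).trans this
  by_contra! hpos
  have : v i₀ < v i₀ := calc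
    v i₀ ≤ ∑ j, M i₀ j * v j := hv i₀
    _ ≤ ∑ j, M i₀ j * v i₀ := sum_le_sum fun j _ => mul_le_mul_of_nonneg_left (hi₀ j) (hM i₀ j)
    _ = (∑ j, M i₀ j) * v i₀ := (sum_mul ..).symm
    _ < 1 * v i₀ := mul_lt_mul_of_pos_right (hrow i₀) hpos
    _ = v i₀ := one_mul _
  exact lt_irrefl _ this

theorem abs_ciInf_sub_ciInf_le {ι : Type*} [Finite ι] [Nonempty ι] {f g : ι → ℝ} {b : ℝ}
    (h : ∀ i, |f i - g i| ≤ b) : |(⨅ i, f i) - ⨅ i, g i| ≤ b := by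
  have key : ∀ f g : ι → ℝ, (∀ i, |f i - g i| ≤ b) → (⨅ i, f i) - ⨅ i, g i ≤ b := by
    intro f g h
    obtain ⟨i, hi⟩ := exists_eq_ciInf_of_finite (f := g)
    rw [← hi]
    linarith [ciInf_le (Finite.bddBelow_range f) i, (abs_le.1 (h i)).2]
  exact abs_sub_le_iff.2 ⟨key f g h, key g f fun i => abs_sub_comm (f i) (g i) ▸ h i⟩

namespace StochasticShortestPath

section Weighted

variable {S : Type*} {ω : S → ℝ}

noncomputable def weightedSupNorm (ω v : S → ℝ) : ℝ := ⨆ s, |v s| / ω s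

theorem abs_le_weightedSupNorm_mul [Finite S] (hω : ∀ s, 0 < ω s) (v : S → ℝ) (s : S) :
    |v s| ≤ weightedSupNorm ω v * ω s :=
  (div_le_iff₀ (hω s)).1 (le_ciSup (f := fun s => |v s| / ω s) (Finite.bddAbove_range _) s)

theorem weightedSupNorm_nonneg (hω : ∀ s, 0 < ω s) (v : S → ℝ) : 0 ≤ weightedSupNorm ω v :=
  Real.iSup_nonneg fun s => div_nonneg (abs_nonneg _) (hω s).le

theorem weightedSupNorm_le (hω : ∀ s, 0 < ω s) {v : S → ℝ} {b : ℝ} (hb : 0 ≤ b)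
    (h : ∀ s, |v s| ≤ b * ω s) : weightedSupNorm ω v ≤ b :=
  Real.iSup_le (fun s => (div_le_iff₀ (hω s)).2 (h s)) hb

end Weighted

variable {S : Type*} [Fintype S] {A : S → Type*} (P : ∀ s, A s → S → ℝ)

def policyMatrix (π : ∀ s, A s) : Matrix S S ℝ := Matrix.of fun s₁ s₂ => P s₁ (π s₁) s₂

def IsProper [DecidableEq S] (π : ∀ s, A s) : Prop :=
  ∃ k : ℕ, ∀ s, ∑ s', (policyMatrix P π ^ k) s s' < 1

noncomputable def maxSurvival (v : S → ℝ) : S → ℝ := fun s => ⨆ a, P s a ⬝ᵥ v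

noncomputable def survival : ℕ → S → ℝ
  | 0 => 1
  | n + 1 => maxSurvival P (survival n)

noncomputable def survivalWeight (m : ℕ) : S → ℝ := ∑ k ∈ range m, survival P k

noncomputable def bellman (c : ∀ s, A s → ℝ) (x : S → ℝ) : S → ℝ :=
  fun s => ⨅ a, c s a + P s a ⬝ᵥ x

section

variable [∀ s, Nonempty (A s)]

theorem maxSurvival_le {v : S → ℝ} {s : S} {b : ℝ}
    (h : ∀ a, P s a ⬝ᵥ v ≤ b) : maxSurvival P v s ≤ b :=
  ciSup_le h

variable {P}

theorem survival_le_one (hP : ∀ s a, 0 ≤ P s a) (hsub : ∀ s a, ∑ s', P s a s' ≤ 1) (n : ℕ) :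
    survival P n ≤ 1 := by
  induction n with
  | zero => exact le_rfl
  | succ n ih =>
    intro s
    refine maxSurvival_le P fun a => ?_
    calc P s a ⬝ᵥ survival P n ≤ P s a ⬝ᵥ 1 := dotProduct_le_dotProduct_of_nonneg_left ih (hP s a)
      _ = ∑ s', P s a s' := dotProduct_one _
      _ ≤ 1 := hsub s a

theorem survivalWeight_le (hP : ∀ s a, 0 ≤ P s a) (hsub : ∀ s a, ∑ s', P s a s' ≤ 1)
    (m : ℕ) (s : S) : survivalWeight P m s ≤ m := by
  rw [survivalWeight, Finset.sum_apply]
  calc ∑ k ∈ range m, survival P k s ≤ ∑ _k ∈ range m, (1 : ℝ) :=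
        sum_le_sum fun k _ => survival_le_one hP hsub k s
    _ = m := by simp

end

variable [∀ s, Fintype (A s)]

theorem le_maxSurvival (v : S → ℝ) (s : S) (a : A s) : P s a ⬝ᵥ v ≤ maxSurvival P v s :=
  le_ciSup (f := fun a => P s a ⬝ᵥ v) (Finite.bddAbove_range _) a

theorem dotProduct_survivalWeight_le (m : ℕ) (s : S) (a : A s) :
    P s a ⬝ᵥ survivalWeight P m ≤ survivalWeight P m s + survival P m s - 1 := by
  have htelescope : ∑ k ∈ range m, survival P (k + 1) s
      = survivalWeight P m s + survival P m s - 1 := by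
    have h := sum_range_succ' (fun k => survival P k s) m
    rw [sum_range_succ] at h
    simp only [survivalWeight, Finset.sum_apply]
    linarith [show survival P 0 s = 1 from rfl]
  rw [← htelescope, survivalWeight, dotProduct_sum]
  exact sum_le_sum fun k _ => le_maxSurvival P _ s a

variable [∀ s, Nonempty (A s)]

theorem exists_dotProduct_eq_maxSurvival (v : S → ℝ) (s : S) :
    ∃ a, P s a ⬝ᵥ v = maxSurvival P v s :=
  exists_eq_ciSup_of_finite

theorem continuous_maxSurvival : Continuous (maxSurvival P) := by
  refine continuous_pi fun s => ?_
  simp only [maxSurvival, ← Finset.sup'_univ_eq_ciSup]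
  exact Continuous.finset_sup'_apply _ fun a _ => by fun_prop

variable {P}

theorem maxSurvival_mono (hP : ∀ s a, 0 ≤ P s a) : Monotone (maxSurvival P) :=
  fun _ w h s => maxSurvival_le P fun a =>
    (dotProduct_le_dotProduct_of_nonneg_left h (hP s a)).trans (le_maxSurvival P w s a)

theorem survival_nonneg (hP : ∀ s a, 0 ≤ P s a) (n : ℕ) : 0 ≤ survival P n := by
  induction n with
  | zero => exact zero_le_one
  | succ n ih =>
    intro s
    exact (dotProduct_nonneg_of_nonneg (hP s (Classical.arbitrary _)) ih).trans
      (le_maxSurvival P _ s _)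

theorem antitone_survival (hP : ∀ s a, 0 ≤ P s a) (hsub : ∀ s a, ∑ s', P s a s' ≤ 1) :
    Antitone (survival P) := by
  refine antitone_nat_of_succ_le fun n => ?_
  induction n with
  | zero => exact survival_le_one hP hsub 1
  | succ n ih => exact maxSurvival_mono hP ih

theorem one_le_survivalWeight (hP : ∀ s a, 0 ≤ P s a) {m : ℕ} (hm : 1 ≤ m) (s : S) :
    1 ≤ survivalWeight P m s := by
  rw [survivalWeight, Finset.sum_apply]
  exact single_le_sum (f := fun k => survival P k s) (fun k _ => survival_nonneg hP k s)
    (mem_range.2 hm)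

theorem weightedSupNorm_bellman_sub_le (hP : ∀ s a, 0 ≤ P s a) {ω : S → ℝ} {γ : ℝ}
    (hω : ∀ s, 0 < ω s) (hγ : 0 ≤ γ) (hcontr : ∀ s a, P s a ⬝ᵥ ω ≤ γ * ω s)
    (c : ∀ s, A s → ℝ) (x y : S → ℝ) :
    weightedSupNorm ω (bellman P c x - bellman P c y) ≤ γ * weightedSupNorm ω (x - y) := by
  set K := weightedSupNorm ω (x - y)
  have hK : 0 ≤ K := weightedSupNorm_nonneg hω _
  refine weightedSupNorm_le hω (mul_nonneg hγ hK) fun s => abs_ciInf_sub_ciInf_le fun a => ?_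
  calc |c s a + P s a ⬝ᵥ x - (c s a + P s a ⬝ᵥ y)| = |∑ s', P s a s' * (x - y) s'| := by
        rw [← dotProduct, dotProduct_sub]; ring_nf
    _ ≤ ∑ s', P s a s' * |(x - y) s'| := (abs_sum_le_sum_abs _ _).trans_eq <|
        sum_congr rfl fun s' _ => by rw [abs_mul, abs_of_nonneg (hP s a s')]
    _ ≤ P s a ⬝ᵥ (K • ω) := dotProduct_le_dotProduct_of_nonneg_left
        (fun s' => abs_le_weightedSupNorm_mul hω (x - y) s') (hP s a)
    _ = K * P s a ⬝ᵥ ω := dotProduct_smul ..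
    _ ≤ K * (γ * ω s) := mul_le_mul_of_nonneg_left (hcontr s a) hK
    _ = γ * K * ω s := by ring

variable [DecidableEq S]

theorem tendsto_survival_zero (hP : ∀ s a, 0 ≤ P s a) (hsub : ∀ s a, ∑ s', P s a s' ≤ 1)
    (hproper : ∀ π, IsProper P π) : Tendsto (survival P) atTop (𝓝 0) := by
  have hlim := tendsto_atTop_ciInf (antitone_survival hP hsub)
    ⟨0, Set.forall_mem_range.2 (survival_nonneg hP)⟩
  set v := ⨅ n, survival P n
  have hfix : maxSurvival P v = v :=
    tendsto_nhds_unique (((continuous_maxSurvival P).tendsto v).comp hlim)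
      ((tendsto_add_atTop_iff_nat 1).2 hlim)
  choose π hπ using exists_dotProduct_eq_maxSurvival P v
  have hπv : v ≤ policyMatrix P π *ᵥ v := fun s => ((congrFun hfix s).symm.trans (hπ s).symm).le
  have hM : ∀ s, 0 ≤ policyMatrix P π s := fun s => hP s (π s)
  obtain ⟨k, hk⟩ := hproper π
  have hv_nonpos : v ≤ 0 :=
    nonpos_of_le_mulVec (pow_row_nonneg hM k) hk (le_pow_mulVec_of_le_mulVec hM hπv k)
  rwa [le_antisymm hv_nonpos (le_ciInf (survival_nonneg hP))] at hlim

theorem exists_survival_le_half (hP : ∀ s a, 0 ≤ P s a) (hsub : ∀ s a, ∑ s', P s a s' ≤ 1)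
    (hproper : ∀ π, IsProper P π) : ∃ m, 1 ≤ m ∧ ∀ s, survival P m s ≤ 1 / 2 := by
  have h s := (tendsto_pi_nhds.1 (tendsto_survival_zero hP hsub hproper) s).eventually_le_const
    (by norm_num : (0 : ℝ) < 1 / 2)
  exact ((eventually_ge_atTop 1).and (eventually_all.2 h)).exists

theorem exists_contraction_weight (hP : ∀ s a, 0 ≤ P s a) (hsub : ∀ s a, ∑ s', P s a s' ≤ 1)
    (hproper : ∀ π, IsProper P π) :
    ∃ (ω : S → ℝ) (γ : ℝ), (∀ s, 0 < ω s ∧ ω s < 1) ∧ 0 < γ ∧ γ < 1 ∧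
      ∀ s a, P s a ⬝ᵥ ω ≤ γ * ω s := by
  obtain ⟨m, hm, hhalf⟩ := exists_survival_le_half hP hsub hproper
  set w := survivalWeight P m
  have hm' : (1 : ℝ) ≤ m := by exact_mod_cast hm
  have hw_ge s : 1 ≤ w s := one_le_survivalWeight hP hm s
  have hw_le s : w s ≤ m := survivalWeight_le hP hsub m s
  have hcontr s a : P s a ⬝ᵥ w ≤ (1 - 1 / (2 * m)) * w s := by
    have h1 := dotProduct_survivalWeight_le P m s a
    have h2 : w s / (2 * m) ≤ 1 / 2 := by
      rw [div_le_div_iff₀ (by positivity) (by norm_num)]; linarith [hw_le s]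
    have h3 : (1 - 1 / (2 * m)) * w s = w s - w s / (2 * m) := by ring
    linarith [hhalf s]
  refine ⟨((m : ℝ) + 1)⁻¹ • w, 1 - 1 / (2 * m), fun s => ⟨?_, ?_⟩, ?_, ?_, fun s a => ?_⟩
  · have := hw_ge s; simp only [Pi.smul_apply, smul_eq_mul]; positivity
  · simp only [Pi.smul_apply, smul_eq_mul]
    rw [inv_mul_lt_one₀ (by positivity)]; linarith [hw_le s]
  · have : 1 / (2 * (m : ℝ)) ≤ 1 / 2 := by gcongr; linarith
    linarith
  · have : 0 < 1 / (2 * (m : ℝ)) := by positivity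
    linarith
  · simp only [dotProduct_smul, Pi.smul_apply, smul_eq_mul, mul_left_comm _ ((m : ℝ) + 1)⁻¹]
    exact mul_le_mul_of_nonneg_left (hcontr s a) (by positivity)

end StochasticShortestPath

open StochasticShortestPath

theorem stmt_3_general (N : ℕ) (A : Fin N → Type)
    [∀ s, Fintype (A s)] [∀ s, Nonempty (A s)]
    (c : ∀ s, A s → ℝ) (P : ∀ s, A s → Fin N → ℝ)
    (hP_nonneg : ∀ s a s', 0 ≤ P s a s')
    (hP_sub : ∀ s a, ∑ s', P s a s' ≤ 1)
    (hproper : ∀ π : ∀ s, A s, ∀ s,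
      ∑ s', ((Matrix.of fun s₁ s₂ => P s₁ (π s₁) s₂) ^ N) s s' < 1) :
    ∃ (ω : Fin N → ℝ) (γ : ℝ),
      (∀ s, 0 < ω s ∧ ω s < 1) ∧ 0 < γ ∧ γ < 1 ∧
      ∀ x y : Fin N → ℝ,
        (⨆ s, |(⨅ a, c s a + ∑ s', P s a s' * x s') -
            (⨅ a, c s a + ∑ s', P s a s' * y s')| / ω s)
          ≤ γ * ⨆ s, |x s - y s| / ω s := by
  obtain ⟨ω, γ, hω, hγ₀, hγ₁, hcontr⟩ :=
    exists_contraction_weight (fun s a => hP_nonneg s a) hP_sub fun π => ⟨N, hproper π⟩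
  exact ⟨ω, γ, hω, hγ₀, hγ₁, weightedSupNorm_bellman_sub_le (fun s a => hP_nonneg s a)
    (fun s => (hω s).1) hγ₀.le hcontr c⟩

theorem stmt_3 (N : ℕ) (hN : 0 < N) (A : Fin N → Type)
    [∀ s, Fintype (A s)] [∀ s, Nonempty (A s)]
    (c : ∀ s, A s → ℝ) (P : ∀ s, A s → Fin N → ℝ)
    (hP_nonneg : ∀ s a s', 0 ≤ P s a s')
    (hP_sub : ∀ s a, ∑ s', P s a s' ≤ 1)
    (hproper : ∀ π : ∀ s, A s, ∀ s,
      ∑ s', ((Matrix.of fun s₁ s₂ => P s₁ (π s₁) s₂) ^ N) s s' < 1) :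
    ∃ (ω : Fin N → ℝ) (γ : ℝ),
      (∀ s, 0 < ω s ∧ ω s < 1) ∧ 0 < γ ∧ γ < 1 ∧
      ∀ x y : Fin N → ℝ,
        (⨆ s, |(⨅ a, c s a + ∑ s', P s a s' * x s') -
            (⨅ a, c s a + ∑ s', P s a s' * y s')| / ω s)
          ≤ γ * ⨆ s, |x s - y s| / ω s :=
  stmt_3_general N A c P hP_nonneg hP_sub hproper
end

section
/- Consider a stochastic shortest path model with finite state space Fin N (N ≥ 1), a nonempty finite action set A s for each state s, nonnegative costs c : (s : Fin N) → A s → ℝ (c s a ≥ 0 for all s, a), and transitions P : (s : Fin N) → A s → Fin N → ℝ with P s a s' ≥ 0 and ∑_{s'} P s a s' ≤ 1 for all s, a. Suppose every stationary policy is proper. Then: (i) the optimal Bellman operator U has a unique fixed point J* : Fin N → ℝ; (ii) for every x : Fin N → ℝ the iterates U^k x converge componentwise to J* as k → ∞; and (iii) for every state s, J* s = min over stationary policies π of ((I − P_π)⁻¹ · c_π) s, where c_π is the vector with entries c s (π s); in particular there exists a stationary policy π with c_π + P_π·J* = J* componentwise. -/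
open Filter Topology

section Aux

variable {N : ℕ} {A : Fin N → Type} [∀ s, Fintype (A s)] [∀ s, Nonempty (A s)]

set_option linter.unusedSectionVars false
set_option linter.unusedVariables false

/-- The "sup-transition" operator: worst-case one-step survival. -/
private noncomputable def TT (P : ∀ s, A s → Fin N → ℝ) (z : Fin N → ℝ) : Fin N → ℝ :=
  fun s => ⨆ a, ∑ s', P s a s' * z s'

private lemma exists_eq_iInf' {ι : Type} [Finite ι] [Nonempty ι] (f : ι → ℝ) :
    ∃ a, (⨅ b, f b) = f a ∧ ∀ b, f a ≤ f b := by
  obtain ⟨a, ha⟩ := Finite.exists_min f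
  exact ⟨a, le_antisymm (ciInf_le (Finite.bddBelow_range f) a) (le_ciInf ha), ha⟩

private lemma exists_eq_iSup' {ι : Type} [Finite ι] [Nonempty ι] (f : ι → ℝ) :
    ∃ a, (⨆ b, f b) = f a := by
  obtain ⟨a, ha⟩ := Finite.exists_max f
  exact ⟨a, le_antisymm (ciSup_le ha) (le_ciSup (Finite.bddAbove_range f) a)⟩

variable {P : ∀ s, A s → Fin N → ℝ}

private lemma le_TT {z : Fin N → ℝ} (s : Fin N) (a : A s) :
    ∑ s', P s a s' * z s' ≤ TT P z s := by
  exact le_ciSup (f := fun a => ∑ s', P s a s' * z s') (Finite.bddAbove_range _) a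

private lemma TT_mono (hP : ∀ s a s', 0 ≤ P s a s') {z w : Fin N → ℝ}
    (h : ∀ t, z t ≤ w t) (s : Fin N) : TT P z s ≤ TT P w s := by
  refine ciSup_le fun a => le_trans ?_ (le_TT s a)
  exact Finset.sum_le_sum fun s' _ => mul_le_mul_of_nonneg_left (h s') (hP s a s')

private lemma TT_iter_mono (hP : ∀ s a s', 0 ≤ P s a s') :
    ∀ (k : ℕ) {z w : Fin N → ℝ}, (∀ t, z t ≤ w t) →
      ∀ s, (TT P)^[k] z s ≤ (TT P)^[k] w s := by
  intro k
  induction k with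
  | zero => intro z w h s; exact h s
  | succ k ih =>
    intro z w h s
    rw [Function.iterate_succ_apply, Function.iterate_succ_apply]
    exact ih (fun t => TT_mono hP h t) s

private lemma TT_const_mul (hP : ∀ s a s', 0 ≤ P s a s') {d : ℝ} (hd : 0 ≤ d)
    (z : Fin N → ℝ) (s : Fin N) : TT P (fun t => d * z t) s = d * TT P z s := by
  unfold TT
  rw [Real.mul_iSup_of_nonneg hd]
  refine congrArg _ (funext fun a => ?_)
  rw [Finset.mul_sum]
  exact Finset.sum_congr rfl fun s' _ => by ring

private lemma TT_iter_const_mul (hP : ∀ s a s', 0 ≤ P s a s') {d : ℝ} (hd : 0 ≤ d) :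
    ∀ (k : ℕ) (z : Fin N → ℝ) (s : Fin N),
      (TT P)^[k] (fun t => d * z t) s = d * (TT P)^[k] z s := by
  intro k
  induction k with
  | zero => intro z s; rfl
  | succ k ih =>
    intro z s
    rw [Function.iterate_succ_apply, Function.iterate_succ_apply]
    have : TT P (fun t => d * z t) = fun t => d * TT P z t :=
      funext fun t => TT_const_mul hP hd z t
    rw [this]
    exact ih (TT P z) s

private lemma TT_le_one (hP : ∀ s a s', 0 ≤ P s a s') (hPs : ∀ s a, ∑ s', P s a s' ≤ 1)
    {z : Fin N → ℝ} (hz : ∀ t, z t ≤ 1) (s : Fin N) : TT P z s ≤ 1 := by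
  refine ciSup_le fun a => le_trans ?_ (hPs s a)
  exact Finset.sum_le_sum fun s' _ => mul_le_of_le_one_right (hP s a s') (hz s')

private lemma TT_iter_le_one (hP : ∀ s a s', 0 ≤ P s a s')
    (hPs : ∀ s a, ∑ s', P s a s' ≤ 1) :
    ∀ (k : ℕ) (s : Fin N), (TT P)^[k] (fun _ => 1) s ≤ 1 := by
  intro k
  induction k with
  | zero => intro s; exact le_rfl
  | succ k ih =>
    intro s
    rw [Function.iterate_succ_apply']
    exact TT_le_one hP hPs ih s

private lemma TT_nonneg (hP : ∀ s a s', 0 ≤ P s a s') {z : Fin N → ℝ}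
    (hz : ∀ t, 0 ≤ z t) (s : Fin N) : 0 ≤ TT P z s := by
  obtain ⟨a⟩ : Nonempty (A s) := inferInstance
  refine le_trans ?_ (le_TT s a)
  exact Finset.sum_nonneg fun s' _ => mul_nonneg (hP s a s') (hz s')

private lemma TT_iter_nonneg (hP : ∀ s a s', 0 ≤ P s a s') :
    ∀ (k : ℕ) (s : Fin N), 0 ≤ (TT P)^[k] (fun _ => 1) s := by
  intro k
  induction k with
  | zero => intro s; exact zero_le_one
  | succ k ih =>
    intro s
    rw [Function.iterate_succ_apply']
    exact TT_nonneg hP ih s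

/-- The key combinatorial consequence of properness of every stationary policy. -/
private lemma TT_iter_lt_one (hN : 0 < N) (hP_nonneg : ∀ s a s', 0 ≤ P s a s')
    (hP_sub : ∀ s a, ∑ s', P s a s' ≤ 1)
    (hproper : ∀ π : ∀ s, A s, ∀ s,
      ∑ s', ((Matrix.of fun s₁ s₂ => P s₁ (π s₁) s₂) ^ N) s s' < 1) :
    ∀ s, (TT P)^[N] (fun _ => 1) s < 1 := by
  by_contra h
  push_neg at h
  obtain ⟨s0, hs0⟩ := h
  set v : ℕ → Fin N → ℝ := fun k => (TT P)^[k] (fun _ => 1) with hv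
  have hvle : ∀ k s, v k s ≤ 1 := TT_iter_le_one hP_nonneg hP_sub
  have hvanti : ∀ s, Antitone fun k => v k s := by
    intro s
    refine antitone_nat_of_succ_le fun k => ?_
    show v (k+1) s ≤ v k s
    simp only [hv, Function.iterate_succ_apply]
    exact TT_iter_mono hP_nonneg k (TT_le_one hP_nonneg hP_sub (fun _ => le_rfl)) s
  classical
  set S : ℕ → Finset (Fin N) := fun k => Finset.univ.filter (fun s => 1 ≤ v k s) with hS
  have hmemS : ∀ k s, s ∈ S k ↔ 1 ≤ v k s := by
    intro k s; simp [hS]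
  have hSanti : ∀ k, S (k+1) ⊆ S k := by
    intro k s hs
    rw [hmemS] at hs ⊢
    exact le_trans hs (hvanti s (Nat.le_succ k))
  have hs0mem : ∀ k ≤ N, s0 ∈ S k := by
    intro k hk
    rw [hmemS]
    exact le_trans hs0 (hvanti s0 hk)
  -- stabilization
  have hstab : ∃ k < N, S k ⊆ S (k+1) := by
    by_contra hc
    push_neg at hc
    have hcard : ∀ k ≤ N, (S k).card ≤ N - k := by
      intro k hk
      induction k with
      | zero => simpa using (Finset.card_filter_le _ _).trans (by simp)
      | succ k ih =>
        have hk' : k < N := Nat.lt_of_succ_le hk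
        have h1 : S (k+1) ⊂ S k :=
          HasSubset.Subset.ssubset_of_ne (hSanti k)
            (fun he => hc k hk' (he ▸ hSanti k) )
        have h2 : (S (k+1)).card < (S k).card := Finset.card_lt_card h1
        have h3 := ih (le_of_lt hk')
        omega
    have h4 := hcard N le_rfl
    have h5 : s0 ∈ S N := hs0mem N le_rfl
    have h6 : 0 < (S N).card := Finset.card_pos.mpr ⟨s0, h5⟩
    omega
  obtain ⟨k, hkN, hk⟩ := hstab
  -- each state in S k has a "safe" action
  have hprop : ∀ s ∈ S k, ∃ a : A s,
      (∑ s', P s a s' = 1) ∧ ∀ s', P s a s' ≠ 0 → s' ∈ S k := by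
    intro s hs
    have hs1 : 1 ≤ v (k+1) s := (hmemS (k+1) s).mp (hk hs)
    have hveq : v (k+1) s = TT P (v k) s := by
      simp only [hv, Function.iterate_succ_apply']
    obtain ⟨a, ha⟩ := exists_eq_iSup' (fun a => ∑ s', P s a s' * v k s')
    have h1 : 1 ≤ ∑ s', P s a s' * v k s' := by
      rw [hveq] at hs1; rw [TT] at hs1; rw [ha] at hs1; exact hs1
    have hle : ∀ s', P s a s' * v k s' ≤ P s a s' := fun s' =>
      mul_le_of_le_one_right (hP_nonneg s a s') (hvle k s')
    have hsum1 : ∑ s', P s a s' = 1 :=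
      le_antisymm (hP_sub s a)
        (le_trans h1 (Finset.sum_le_sum fun s' _ => hle s'))
    have hzero : ∑ s', P s a s' * (1 - v k s') = 0 := by
      have he : ∑ s', P s a s' * (1 - v k s')
          = ∑ s', P s a s' - ∑ s', P s a s' * v k s' := by
        rw [← Finset.sum_sub_distrib]
        exact Finset.sum_congr rfl fun s' _ => by ring
      have h2 : ∑ s', P s a s' * v k s' ≤ ∑ s', P s a s' :=
        Finset.sum_le_sum fun s' _ => hle s'
      have h3 : ∑ s', P s a s' * v k s' ≤ 1 := hsum1 ▸ h2
      have h4 : ∑ s', P s a s' * v k s' = 1 := le_antisymm h3 h1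
      rw [he, hsum1, h4, sub_self]
    have hterm := (Finset.sum_eq_zero_iff_of_nonneg (fun s' _ =>
      mul_nonneg (hP_nonneg s a s') (by linarith [hvle k s']))).mp hzero
    refine ⟨a, hsum1, fun s' hP' => ?_⟩
    have h5 := hterm s' (Finset.mem_univ s')
    rcases mul_eq_zero.mp h5 with h6 | h6
    · exact absurd h6 hP'
    · rw [hmemS]; linarith
  choose! π hπ1 hπ2 using hprop
  set M : Matrix (Fin N) (Fin N) ℝ := Matrix.of fun s₁ s₂ => P s₁ (π s₁) s₂ with hM
  have hMmono : ∀ x y : Fin N → ℝ, (∀ t, x t ≤ y t) → ∀ s, M.mulVec x s ≤ M.mulVec y s := by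
    intro x y hxy s
    show ∑ s', M s s' * x s' ≤ ∑ s', M s s' * y s'
    refine Finset.sum_le_sum fun s' _ => ?_
    exact mul_le_mul_of_nonneg_left (hxy s') (hP_nonneg s (π s) s')
  set χ : Fin N → ℝ := fun s => if s ∈ S k then (1:ℝ) else 0 with hχ
  have hχle1 : ∀ s, χ s ≤ 1 := by intro s; by_cases h : s ∈ S k <;> simp [hχ, h]
  have hstep : ∀ s, χ s ≤ M.mulVec χ s := by
    intro s
    by_cases hs : s ∈ S k
    · have he : M.mulVec χ s = ∑ s', P s (π s) s' := by
        show ∑ s', M s s' * χ s' = _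
        refine Finset.sum_congr rfl fun s' _ => ?_
        by_cases h' : s' ∈ S k
        · simp [hχ, h', hM]
        · have : P s (π s) s' = 0 := by
            by_contra hne
            exact h' (hπ2 s hs s' hne)
          simp [hχ, h', hM, this]
      rw [he, hπ1 s hs]
      simp [hχ, hs]
    · have : χ s = 0 := by simp [hχ, hs]
      rw [this]
      show (0:ℝ) ≤ ∑ s', M s s' * χ s'
      refine Finset.sum_nonneg fun s' _ => ?_
      refine mul_nonneg (hP_nonneg s (π s) s') ?_
      by_cases h' : s' ∈ S k <;> simp [hχ, h']
  have hiter : ∀ m s, χ s ≤ (M ^ m).mulVec (fun _ => 1) s := by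
    intro m
    induction m with
    | zero => intro s; simpa [Matrix.one_mulVec] using hχle1 s
    | succ m ih =>
      intro s
      have he : (M ^ (m+1)).mulVec (fun _ => 1) = M.mulVec ((M ^ m).mulVec (fun _ => 1)) := by
        rw [pow_succ', Matrix.mulVec_mulVec]
      rw [he]
      exact le_trans (hstep s) (hMmono χ _ ih s)
  have hfin : (1:ℝ) ≤ ∑ s', (M ^ N) s0 s' := by
    have h1 : χ s0 = 1 := by simp [hχ, hs0mem k (le_of_lt hkN)]
    have h2 := hiter N s0
    rw [h1] at h2
    refine le_trans h2 (le_of_eq ?_)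
    show ∑ s', (M ^ N) s0 s' * 1 = _
    simp
  exact absurd hfin (not_le.mpr (hproper π s0))

/-- General fixed-point/convergence lemma for operators dominated by `TT`. -/
private lemma fixpt (hN : 0 < N) (hP_nonneg : ∀ s a s', 0 ≤ P s a s')
    (hP_sub : ∀ s a, ∑ s', P s a s' ≤ 1)
    (hTN : ∀ s, (TT P)^[N] (fun _ => 1) s < 1)
    (V : (Fin N → ℝ) → (Fin N → ℝ))
    (HV : ∀ x y s, dist (V x s) (V y s) ≤ TT P (fun t => dist (x t) (y t)) s) :
    ∃ J, V J = J ∧ (∀ J', V J' = J' → J' = J) ∧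
      ∀ x s, Tendsto (fun k => V^[k] x s) atTop (𝓝 (J s)) := by
  haveI : Nonempty (Fin N) := ⟨⟨0, hN⟩⟩
  have hiter : ∀ (k : ℕ) x y s,
      dist (V^[k] x s) (V^[k] y s) ≤ (TT P)^[k] (fun t => dist (x t) (y t)) s := by
    intro k
    induction k with
    | zero => intro x y s; exact le_rfl
    | succ k ih =>
      intro x y s
      rw [Function.iterate_succ_apply V k, Function.iterate_succ_apply V k,
        Function.iterate_succ_apply (TT P) k]
      exact le_trans (ih (V x) (V y) s) (TT_iter_mono hP_nonneg k (fun t => HV x y t) s)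
  have hdist : ∀ (k : ℕ) x y s,
      dist (V^[k] x s) (V^[k] y s) ≤ dist x y * (TT P)^[k] (fun _ => 1) s := by
    intro k x y s
    refine (hiter k x y s).trans ?_
    have h1 : ∀ t, dist (x t) (y t) ≤ dist x y * 1 := by
      intro t; rw [mul_one]; exact dist_le_pi_dist x y t
    calc (TT P)^[k] (fun t => dist (x t) (y t)) s
        ≤ (TT P)^[k] (fun _ => dist x y * 1) s := TT_iter_mono hP_nonneg k h1 s
      _ = dist x y * (TT P)^[k] (fun _ => 1) s :=
          TT_iter_const_mul hP_nonneg dist_nonneg k (fun _ => 1) s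
  have hnonexp : ∀ (k : ℕ) x y, dist (V^[k] x) (V^[k] y) ≤ dist x y := by
    intro k x y
    rw [dist_pi_le_iff dist_nonneg]
    intro s
    exact (hdist k x y s).trans
      (mul_le_of_le_one_right dist_nonneg (TT_iter_le_one hP_nonneg hP_sub k s))
  set β : ℝ := Finset.univ.sup' Finset.univ_nonempty (fun s => (TT P)^[N] (fun _ => 1) s)
    with hβ
  have hβlt : β < 1 := by
    rw [hβ, Finset.sup'_lt_iff]
    exact fun s _ => hTN s
  have hβ0 : 0 ≤ β := by
    have h1 : (0:ℝ) ≤ (TT P)^[N] (fun _ => 1) (⟨0, hN⟩ : Fin N) :=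
      TT_iter_nonneg hP_nonneg N ⟨0, hN⟩
    have h2 : (TT P)^[N] (fun _ => 1) (⟨0, hN⟩ : Fin N) ≤ β :=
      Finset.le_sup' _ (Finset.mem_univ (⟨0, hN⟩ : Fin N))
    linarith
  have hcontr : ∀ x y, dist (V^[N] x) (V^[N] y) ≤ β * dist x y := by
    intro x y
    rw [dist_pi_le_iff (mul_nonneg hβ0 dist_nonneg)]
    intro s
    refine (hdist N x y s).trans ?_
    rw [mul_comm β]
    exact mul_le_mul_of_nonneg_left (Finset.le_sup' _ (Finset.mem_univ s)) dist_nonneg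
  have hCW : ContractingWith ⟨β, hβ0⟩ (V^[N]) :=
    ⟨by exact_mod_cast hβlt, LipschitzWith.of_dist_le_mul fun x y => hcontr x y⟩
  set J := ContractingWith.fixedPoint (V^[N]) hCW with hJ
  have hJfixN : V^[N] J = J := hCW.fixedPoint_isFixedPt
  have hVJ : V J = J := by
    have h1 : Function.IsFixedPt (V^[N]) (V J) := by
      show V^[N] (V J) = V J
      rw [← Function.iterate_succ_apply V N J, Function.iterate_succ_apply' V N J, hJfixN]
    have h2 := hCW.fixedPoint_unique h1
    rw [← hJ] at h2
    rw [h2]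
  have huniq : ∀ J', V J' = J' → J' = J := by
    intro J' hJ'
    have h1 : Function.IsFixedPt (V^[N]) J' := Function.IsFixedPt.iterate hJ' N
    have := hCW.fixedPoint_unique h1
    rw [← hJ] at this
    exact this
  refine ⟨J, hVJ, huniq, ?_⟩
  intro x s
  set a : ℕ → ℝ := fun k => dist (V^[k] x) J with haa
  have ha0 : ∀ k, 0 ≤ a k := fun k => dist_nonneg
  have haanti : Antitone a := by
    refine antitone_nat_of_succ_le fun k => ?_
    show dist (V^[k+1] x) J ≤ dist (V^[k] x) J
    calc dist (V^[k+1] x) J = dist (V^[1] (V^[k] x)) (V^[1] J) := by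
          rw [Function.iterate_succ_apply' V k x]
          simp [hVJ]
      _ ≤ dist (V^[k] x) J := hnonexp 1 _ _
  have hsub : ∀ m, a (m * N) ≤ β ^ m * a 0 := by
    intro m
    induction m with
    | zero => simp
    | succ m ih =>
      have he : V^[(m+1) * N] x = V^[N] (V^[m * N] x) := by
        rw [show (m+1) * N = N + m * N by ring, Function.iterate_add_apply]
      have he2 : (V^[N]) J = J := hJfixN
      calc a ((m+1) * N) = dist (V^[N] (V^[m*N] x)) (V^[N] J) := by
            show dist (V^[(m+1) * N] x) J = _
            rw [he, he2]
        _ ≤ β * a (m * N) := hcontr _ _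
        _ ≤ β * (β ^ m * a 0) := mul_le_mul_of_nonneg_left ih hβ0
        _ = β ^ (m+1) * a 0 := by ring
  have haz : Tendsto a atTop (𝓝 0) := by
    refine Metric.tendsto_atTop.mpr fun ε hε => ?_
    have ht : Tendsto (fun m => β ^ m * a 0) atTop (𝓝 0) := by
      have := (tendsto_pow_atTop_nhds_zero_of_lt_one hβ0 hβlt).mul_const (a 0)
      simpa using this
    obtain ⟨m, hm⟩ := (ht.eventually (gt_mem_nhds hε)).exists
    refine ⟨m * N, fun n hn => ?_⟩
    rw [Real.dist_eq, sub_zero, abs_of_nonneg (ha0 n)]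
    exact lt_of_le_of_lt ((haanti hn).trans (hsub m)) hm
  have hcomp : ∀ k, dist (V^[k] x s) (J s) ≤ a k := fun k => dist_le_pi_dist _ _ s
  rw [tendsto_iff_dist_tendsto_zero]
  exact squeeze_zero (fun k => dist_nonneg) hcomp haz

end Aux

theorem stmt_4 (N : ℕ) (hN : 0 < N) (A : Fin N → Type)
    [∀ s, Fintype (A s)] [∀ s, Nonempty (A s)]
    (c : ∀ s, A s → ℝ) (P : ∀ s, A s → Fin N → ℝ)
    (hc : ∀ s a, 0 ≤ c s a)
    (hP_nonneg : ∀ s a s', 0 ≤ P s a s')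
    (hP_sub : ∀ s a, ∑ s', P s a s' ≤ 1)
    (hproper : ∀ π : ∀ s, A s, ∀ s,
      ∑ s', ((Matrix.of fun s₁ s₂ => P s₁ (π s₁) s₂) ^ N) s s' < 1) :
    ∃ J : Fin N → ℝ,
      (∀ s, J s = ⨅ a, c s a + ∑ s', P s a s' * J s') ∧
      (∀ J' : Fin N → ℝ, (∀ s, J' s = ⨅ a, c s a + ∑ s', P s a s' * J' s') → J' = J) ∧
      (∀ x : Fin N → ℝ, ∀ s,
        Tendsto (fun k => (fun y s₀ => ⨅ a, c s₀ a + ∑ s', P s₀ a s' * y s')^[k] x s)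
          atTop (𝓝 (J s))) ∧
      (∀ s, J s = ⨅ π : ∀ s₀, A s₀,
        (1 - Matrix.of fun s₁ s₂ => P s₁ (π s₁) s₂)⁻¹.mulVec (fun s₀ => c s₀ (π s₀)) s) ∧
      (∃ π : ∀ s₀, A s₀, ∀ s, c s (π s) + ∑ s', P s (π s) s' * J s' = J s) := by
  classical
  have hTN := TT_iter_lt_one hN hP_nonneg hP_sub hproper
  set U : (Fin N → ℝ) → (Fin N → ℝ) :=
    fun y s₀ => ⨅ a, c s₀ a + ∑ s', P s₀ a s' * y s' with hU
  -- U is dominated by TT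
  have hsumdiff : ∀ (s : Fin N) (a : A s) (x y : Fin N → ℝ),
      ∑ s', P s a s' * x s' - ∑ s', P s a s' * y s'
        ≤ ∑ s', P s a s' * dist (x s') (y s') := by
    intro s a x y
    rw [← Finset.sum_sub_distrib]
    refine Finset.sum_le_sum fun s' _ => ?_
    rw [← mul_sub]
    refine mul_le_mul_of_nonneg_left ?_ (hP_nonneg s a s')
    rw [Real.dist_eq]
    exact le_abs_self _
  have hUdiff : ∀ x y s, U x s - U y s ≤ TT P (fun t => dist (x t) (y t)) s := by
    intro x y s
    obtain ⟨a, hay, _⟩ := exists_eq_iInf' (fun a => c s a + ∑ s', P s a s' * y s')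
    have h1 : U x s ≤ c s a + ∑ s', P s a s' * x s' :=
      ciInf_le (Finite.bddBelow_range _) a
    have h2 : U y s = c s a + ∑ s', P s a s' * y s' := hay
    have h3 := hsumdiff s a x y
    have h4 := le_TT (P := P) (z := fun t => dist (x t) (y t)) s a
    linarith
  have HU : ∀ x y s, dist (U x s) (U y s) ≤ TT P (fun t => dist (x t) (y t)) s := by
    intro x y s
    rw [Real.dist_eq, abs_sub_le_iff]
    constructor
    · exact hUdiff x y s
    · have := hUdiff y x s
      simpa [dist_comm] using this
  obtain ⟨J, hUJ, hUuniq, hUconv⟩ := fixpt hN hP_nonneg hP_sub hTN U HU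
  -- policy evaluation operators
  set Tpol : (∀ s, A s) → (Fin N → ℝ) → (Fin N → ℝ) :=
    fun π x s => c s (π s) + ∑ s', P s (π s) s' * x s' with hTpol
  have HTpol : ∀ π x y s,
      dist (Tpol π x s) (Tpol π y s) ≤ TT P (fun t => dist (x t) (y t)) s := by
    intro π x y s
    rw [Real.dist_eq, abs_sub_le_iff]
    have h4 := le_TT (P := P) (z := fun t => dist (x t) (y t)) s (π s)
    constructor
    · have h3 := hsumdiff s (π s) x y
      simp only [hTpol]
      linarith
    · have h3 := hsumdiff s (π s) y x
      have h5 : ∑ s', P s (π s) s' * dist (y s') (x s')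
          ≤ TT P (fun t => dist (x t) (y t)) s := by
        simpa [dist_comm] using le_TT (P := P) (z := fun t => dist (y t) (x t)) s (π s)
      simp only [hTpol]
      have h5' := le_TT (P := P) (z := fun t => dist (y t) (x t)) s (π s)
      have he : TT P (fun t => dist (y t) (x t)) s = TT P (fun t => dist (x t) (y t)) s := by
        simp [dist_comm]
      linarith
  have hpol : ∀ π : ∀ s, A s, ∃ Jp, Tpol π Jp = Jp ∧ (∀ J', Tpol π J' = J' → J' = Jp) ∧
      ∀ x s, Tendsto (fun k => (Tpol π)^[k] x s) atTop (𝓝 (Jp s)) :=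
    fun π => fixpt hN hP_nonneg hP_sub hTN (Tpol π) (HTpol π)
  choose Jp hJpfix hJpuniq hJpconv using hpol
  -- J ≤ Jp π
  have hTpolmono : ∀ π (x y : Fin N → ℝ), (∀ t, x t ≤ y t) → ∀ s, Tpol π x s ≤ Tpol π y s := by
    intro π x y hxy s
    simp only [hTpol]
    have := Finset.sum_le_sum (fun s' (_ : s' ∈ Finset.univ) =>
      mul_le_mul_of_nonneg_left (hxy s') (hP_nonneg s (π s) s'))
    linarith
  have hJleTpol : ∀ π s, J s ≤ Tpol π J s := by
    intro π s
    have : U J s ≤ Tpol π J s := ciInf_le (Finite.bddBelow_range _) (π s)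
    rw [hUJ] at this
    exact this
  have hchain : ∀ π (k : ℕ) s, J s ≤ (Tpol π)^[k] J s := by
    intro π k
    induction k with
    | zero => intro s; exact le_rfl
    | succ k ih =>
      intro s
      rw [Function.iterate_succ_apply']
      exact le_trans (hJleTpol π s) (hTpolmono π J _ ih s)
  have hJleJp : ∀ π s, J s ≤ Jp π s := by
    intro π s
    exact ge_of_tendsto (hJpconv π J s) (Filter.Eventually.of_forall fun k => hchain π k s)
  -- greedy policy
  have hgre : ∀ s : Fin N, ∃ a : A s,
      (⨅ b, c s b + ∑ s', P s b s' * J s') = c s a + ∑ s', P s a s' * J s' := by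
    intro s
    obtain ⟨a, ha, _⟩ := exists_eq_iInf' (fun a => c s a + ∑ s', P s a s' * J s')
    exact ⟨a, ha⟩
  choose πs hπs using hgre
  have hgreedy : Tpol πs J = J := by
    funext s
    have : U J s = Tpol πs J s := hπs s
    rw [← this]
    rw [hUJ]
  have hJpπs : J = Jp πs := hJpuniq πs J hgreedy
  -- matrix inverse formula
  have hmat : ∀ π : ∀ s, A s,
      (1 - Matrix.of fun s₁ s₂ => P s₁ (π s₁) s₂)⁻¹.mulVec (fun s₀ => c s₀ (π s₀)) = Jp π := by
    intro π
    set M : Matrix (Fin N) (Fin N) ℝ := Matrix.of fun s₁ s₂ => P s₁ (π s₁) s₂ with hM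
    have hdet : IsUnit (1 - M).det := by
      rw [isUnit_iff_ne_zero]
      intro hd
      obtain ⟨v, hv0, hv⟩ := (Matrix.exists_mulVec_eq_zero_iff).mpr hd
      have hMv : M.mulVec v = v := by
        have := hv
        rw [Matrix.sub_mulVec, Matrix.one_mulVec] at this
        have h2 := sub_eq_zero.mp this
        exact h2.symm
      have hfix2 : Tpol π (Jp π + v) = Jp π + v := by
        funext s
        have h1 : Tpol π (Jp π + v) s = Tpol π (Jp π) s + M.mulVec v s := by
          simp only [hTpol, Pi.add_apply]
          have : ∑ s', P s (π s) s' * (Jp π s' + v s')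
              = ∑ s', P s (π s) s' * Jp π s' + ∑ s', P s (π s) s' * v s' := by
            rw [← Finset.sum_add_distrib]
            exact Finset.sum_congr rfl fun s' _ => by ring
          rw [this]
          have hMv' : M.mulVec v s = ∑ s', P s (π s) s' * v s' := rfl
          rw [hMv']
          ring
        rw [h1, hJpfix π, hMv]
        rfl
      have := hJpuniq π (Jp π + v) hfix2
      have hv00 : v = 0 := by
        have h3 : Jp π + v = Jp π + 0 := by rw [this]; simp
        exact add_left_cancel h3
      exact hv0 hv00
    have hsolve : (1 - M).mulVec (Jp π) = fun s₀ => c s₀ (π s₀) := by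
      funext s
      rw [Matrix.sub_mulVec, Matrix.one_mulVec]
      have h1 : Tpol π (Jp π) s = Jp π s := by rw [hJpfix π]
      have h2 : M.mulVec (Jp π) s = ∑ s', P s (π s) s' * Jp π s' := rfl
      simp only [hTpol] at h1
      simp only [Pi.sub_apply, h2]
      linarith
    rw [← hsolve, Matrix.mulVec_mulVec, Matrix.nonsing_inv_mul _ hdet, Matrix.one_mulVec]
  refine ⟨J, ?_, ?_, ?_, ?_, ?_⟩
  · intro s
    conv_lhs => rw [← hUJ]
  · intro J' hJ'
    refine hUuniq J' ?_
    funext s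
    exact (hJ' s).symm
  · intro x s
    exact hUconv x s
  · intro s
    have he : ∀ π : ∀ s₀, A s₀,
        (1 - Matrix.of fun s₁ s₂ => P s₁ (π s₁) s₂)⁻¹.mulVec (fun s₀ => c s₀ (π s₀)) s
          = Jp π s := fun π => by rw [hmat π]
    rw [iInf_congr he]
    refine le_antisymm (le_ciInf fun π => hJleJp π s) ?_
    have := ciInf_le (Finite.bddBelow_range fun π => Jp π s) πs
    rw [← hJpπs] at this
    exact this
  · refine ⟨πs, fun s => ?_⟩
    have := congrFun hgreedy s
    simpa only [hTpol] using this
end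

section
/- Consider a stochastic shortest path model with finite state space Fin N (N ≥ 1), a nonempty finite action set A s for each state s, costs c : (s : Fin N) → A s → ℝ, and transitions P : (s : Fin N) → A s → Fin N → ℝ with P s a s' ≥ 0 and ∑_{s'} P s a s' ≤ 1 for all s, a. Let x : Fin N → ℝ be superharmonic, i.e., x s ≤ c s a + ∑_{s'} P s a s' · x s' for all s and all a ∈ A s. If π is a stationary policy such that the matrix powers (P_π)^k converge entrywise to 0 as k → ∞, then I − P_π is invertible and x ≤ (I − P_π)⁻¹ · c_π componentwise. -/
/-!
Write `Q = P_π` and `S = (I - Q)⁻¹`. A fixed vector of `Q` is fixed by every power `Q ^ k`,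
and `Q ^ k → 0` forces it to vanish, so `I - Q` is invertible. The partial sums
`∑_{j<k} Q ^ j = (I - Q ^ k) S` then converge to `S`, which is therefore entrywise nonnegative.
Superharmonicity says that `d = c_π - (I - Q) x` is nonnegative, and `J_π - x = S d ≥ 0`.
-/

open Filter Topology Finset

theorem tendsto_geom_sum_of_tendsto_pow_zero {R : Type*} [Ring R] [TopologicalSpace R]
    [IsTopologicalRing R] {x y : R} (hx : Tendsto (x ^ ·) atTop (𝓝 0)) (hy : (1 - x) * y = 1) :
    Tendsto (fun k => ∑ i ∈ range k, x ^ i) atTop (𝓝 y) := by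
  have hsum : ∀ k, ∑ i ∈ range k, x ^ i = (1 - x ^ k) * y := fun k => by
    rw [← geom_sum_mul_neg, mul_assoc, hy, mul_one]
  simpa [hsum] using (tendsto_const_nhds (x := (1 : R)).sub hx).mul_const y

namespace Matrix

variable {n : Type*} [Fintype n] [DecidableEq n]

theorem isUnit_one_sub_of_tendsto_pow_zero {K : Type*} [Field K] [TopologicalSpace K]
    [IsTopologicalRing K] [T2Space K] {Q : Matrix n n K}
    (hQ : Tendsto (Q ^ ·) atTop (𝓝 0)) : IsUnit (1 - Q) := by
  rw [isUnit_iff_isUnit_det, isUnit_iff_ne_zero]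
  intro hdet
  obtain ⟨v, hv0, hv⟩ := exists_mulVec_eq_zero_iff.mpr hdet
  have hfix : Q *ᵥ v = v := by
    rw [sub_mulVec, one_mulVec, sub_eq_zero] at hv
    exact hv.symm
  have hpow_fix : ∀ k, (Q ^ k) *ᵥ v = v := fun k => by
    induction k with
    | zero => simp
    | succ k ih => rw [pow_succ', ← mulVec_mulVec, ih, hfix]
  have hlim : Tendsto (fun k => (Q ^ k) *ᵥ v) atTop (𝓝 (0 *ᵥ v)) :=
    ((continuous_id.matrix_mulVec continuous_const).tendsto 0).comp hQ
  simp only [hpow_fix, zero_mulVec] at hlim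
  exact hv0 (tendsto_nhds_unique tendsto_const_nhds hlim)

variable {Q : Matrix n n ℝ}

theorem inv_one_sub_apply_nonneg (hQ0 : ∀ i j, 0 ≤ Q i j)
    (hQ : Tendsto (Q ^ ·) atTop (𝓝 0)) (i j : n) : 0 ≤ (1 - Q)⁻¹ i j := by
  have hdet := (isUnit_iff_isUnit_det _).mp (isUnit_one_sub_of_tendsto_pow_zero hQ)
  have hsum := tendsto_geom_sum_of_tendsto_pow_zero hQ (mul_nonsing_inv _ hdet)
  refine ge_of_tendsto' (((continuous_apply_apply i j).tendsto _).comp hsum) fun k => ?_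
  show 0 ≤ (∑ l ∈ range k, Q ^ l) i j
  rw [sum_apply]
  exact sum_nonneg fun l _ => pow_apply_nonneg hQ0 l i j

theorem le_inv_one_sub_mulVec_of_le_add_mulVec (hQ0 : ∀ i j, 0 ≤ Q i j)
    (hQ : Tendsto (Q ^ ·) atTop (𝓝 0)) {c x : n → ℝ} (hx : x ≤ c + Q *ᵥ x) :
    x ≤ (1 - Q)⁻¹ *ᵥ c := by
  have hdet := (isUnit_iff_isUnit_det _).mp (isUnit_one_sub_of_tendsto_pow_zero hQ)
  have hslack : 0 ≤ c - (1 - Q) *ᵥ x := fun i => by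
    simpa [sub_mulVec, add_sub_assoc'] using hx i
  have hgap : (1 - Q)⁻¹ *ᵥ c - x = (1 - Q)⁻¹ *ᵥ (c - (1 - Q) *ᵥ x) := by
    rw [mulVec_sub, mulVec_mulVec, nonsing_inv_mul _ hdet, one_mulVec]
  refine sub_nonneg.mp (hgap ▸ fun i => sum_nonneg fun j _ => ?_)
  exact mul_nonneg (inv_one_sub_apply_nonneg hQ0 hQ i j) (hslack j)

end Matrix

theorem stmt_5_general (N : ℕ) (A : Fin N → Type)
    (c : ∀ s, A s → ℝ) (P : ∀ s, A s → Fin N → ℝ)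
    (hP_nonneg : ∀ s a s', 0 ≤ P s a s')
    (x : Fin N → ℝ)
    (hx : ∀ s, ∀ a : A s, x s ≤ c s a + ∑ s', P s a s' * x s')
    (π : ∀ s, A s)
    (hπ : ∀ i j, Tendsto
      (fun k => ((Matrix.of fun s₁ s₂ => P s₁ (π s₁) s₂) ^ k) i j) atTop (𝓝 0)) :
    IsUnit (1 - Matrix.of fun s₁ s₂ => P s₁ (π s₁) s₂) ∧
    ∀ s, x s ≤
      (1 - Matrix.of fun s₁ s₂ => P s₁ (π s₁) s₂)⁻¹.mulVec (fun s₀ => c s₀ (π s₀)) s := by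
  set Q : Matrix (Fin N) (Fin N) ℝ := Matrix.of fun s₁ s₂ => P s₁ (π s₁) s₂
  have hQ : Tendsto (Q ^ ·) atTop (𝓝 0) :=
    tendsto_pi_nhds.2 fun i => tendsto_pi_nhds.2 fun j => hπ i j
  exact ⟨Matrix.isUnit_one_sub_of_tendsto_pow_zero hQ,
    Matrix.le_inv_one_sub_mulVec_of_le_add_mulVec (fun i j => hP_nonneg i (π i) j) hQ
      fun s => hx s (π s)⟩

theorem stmt_5 (N : ℕ) (hN : 0 < N) (A : Fin N → Type)
    [∀ s, Fintype (A s)] [∀ s, Nonempty (A s)]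
    (c : ∀ s, A s → ℝ) (P : ∀ s, A s → Fin N → ℝ)
    (hP_nonneg : ∀ s a s', 0 ≤ P s a s')
    (hP_sub : ∀ s a, ∑ s', P s a s' ≤ 1)
    (x : Fin N → ℝ)
    (hx : ∀ s, ∀ a : A s, x s ≤ c s a + ∑ s', P s a s' * x s')
    (π : ∀ s, A s)
    (hπ : ∀ i j, Tendsto
      (fun k => ((Matrix.of fun s₁ s₂ => P s₁ (π s₁) s₂) ^ k) i j) atTop (𝓝 0)) :
    IsUnit (1 - Matrix.of fun s₁ s₂ => P s₁ (π s₁) s₂) ∧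
    ∀ s, x s ≤
      (1 - Matrix.of fun s₁ s₂ => P s₁ (π s₁) s₂)⁻¹.mulVec (fun s₀ => c s₀ (π s₀)) s :=
  stmt_5_general N A c P hP_nonneg x hx π hπ
end

section
/- Consider a stochastic shortest path model with finite state space Fin N (N ≥ 1), a nonempty finite action set A s for each state s, nonnegative costs c : (s : Fin N) → A s → ℝ, and transitions P : (s : Fin N) → A s → Fin N → ℝ with P s a s' ≥ 0 and ∑_{s'} P s a s' ≤ 1 for all s, a. Suppose every stationary policy is proper, and suppose J* : Fin N → ℝ is a fixed point of the optimal Bellman operator U, i.e., J* s = min_{a ∈ A s} (c s a + ∑_{s'} P s a s' · J* s') for all s. Then J* is superharmonic, and every superharmonic x : Fin N → ℝ satisfies x ≤ J* componentwise; consequently J* is the unique maximizer of ∑_s x s over all superharmonic x. -/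
theorem stmt_6 (N : ℕ) (hN : 0 < N) (A : Fin N → Type)
    [∀ s, Fintype (A s)] [∀ s, Nonempty (A s)]
    (c : ∀ s, A s → ℝ) (P : ∀ s, A s → Fin N → ℝ)
    (hc : ∀ s a, 0 ≤ c s a)
    (hP_nonneg : ∀ s a s', 0 ≤ P s a s')
    (hP_sub : ∀ s a, ∑ s', P s a s' ≤ 1)
    (hproper : ∀ π : ∀ s, A s, ∀ s,
      ∑ s', ((Matrix.of fun s₁ s₂ => P s₁ (π s₁) s₂) ^ N) s s' < 1)
    (J : Fin N → ℝ)
    (hJ : ∀ s, J s = ⨅ a, c s a + ∑ s', P s a s' * J s') :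
    (∀ s, ∀ a : A s, J s ≤ c s a + ∑ s', P s a s' * J s') ∧
    (∀ x : Fin N → ℝ,
      (∀ s, ∀ a : A s, x s ≤ c s a + ∑ s', P s a s' * x s') → ∀ s, x s ≤ J s) ∧
    (∀ x : Fin N → ℝ,
      (∀ s, ∀ a : A s, x s ≤ c s a + ∑ s', P s a s' * x s') →
        ∑ s, x s = ∑ s, J s → x = J) := by
  classical
  have h1 : ∀ s, ∀ a : A s, J s ≤ c s a + ∑ s', P s a s' * J s' := by
    intro s a
    rw [hJ s]
    exact ciInf_le (Finite.bddBelow_range _) a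
  have hπex : ∀ s, ∃ a : A s, c s a + ∑ s', P s a s' * J s' = J s := by
    intro s
    obtain ⟨a, ha⟩ := Finite.exists_min (fun a : A s => c s a + ∑ s', P s a s' * J s')
    refine ⟨a, le_antisymm ?_ (h1 s a)⟩
    rw [hJ s]
    exact le_ciInf ha
  choose π hπ using hπex
  set Q : Matrix (Fin N) (Fin N) ℝ := Matrix.of fun s₁ s₂ => P s₁ (π s₁) s₂ with hQdef
  have hQapp : ∀ s s', Q s s' = P s (π s) s' := fun s s' => rfl
  have hQnn : ∀ k (s s' : Fin N), 0 ≤ (Q ^ k) s s' := by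
    intro k
    induction k with
    | zero =>
      intro s s'
      rw [pow_zero, Matrix.one_apply]
      split <;> norm_num
    | succ k ih =>
      intro s s'
      rw [pow_succ, Matrix.mul_apply]
      exact Finset.sum_nonneg fun j _ => mul_nonneg (ih s j) (hP_nonneg j (π j) s')
  have h2 : ∀ x : Fin N → ℝ,
      (∀ s, ∀ a : A s, x s ≤ c s a + ∑ s', P s a s' * x s') → ∀ s, x s ≤ J s := by
    intro x hx
    set d : Fin N → ℝ := fun s => x s - J s with hd
    have hstep : ∀ s, d s ≤ ∑ s', Q s s' * d s' := by
      intro s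
      have h1 := hx s (π s)
      have h2 := hπ s
      have : ∑ s', Q s s' * d s' = (∑ s', P s (π s) s' * x s') - ∑ s', P s (π s) s' * J s' := by
        rw [← Finset.sum_sub_distrib]
        exact Finset.sum_congr rfl fun j _ => by simp [hQapp, hd]; ring
      rw [this]
      simp only [hd]
      linarith
    have hiter : ∀ k, ∀ s, d s ≤ ∑ s', (Q ^ k) s s' * d s' := by
      intro k
      induction k with
      | zero =>
        intro s
        simp [Matrix.one_apply]
      | succ k ih =>
        intro s
        calc d s ≤ ∑ s', (Q ^ k) s s' * d s' := ih s
          _ ≤ ∑ s', (Q ^ k) s s' * (∑ s'', Q s' s'' * d s'') := by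
              exact Finset.sum_le_sum fun j _ =>
                mul_le_mul_of_nonneg_left (hstep j) (hQnn k s j)
          _ = ∑ s'', (Q ^ (k + 1)) s s'' * d s'' := by
              rw [pow_succ]
              simp only [Matrix.mul_apply, Finset.sum_mul, Finset.mul_sum]
              rw [Finset.sum_comm]
              congr 1; ext j; congr 1; ext i; ring
    by_contra hcon
    push_neg at hcon
    obtain ⟨s0, hs0⟩ := hcon
    have : Nonempty (Fin N) := ⟨⟨0, hN⟩⟩
    obtain ⟨sm, -, hsm⟩ := Finset.exists_max_image Finset.univ d ⟨⟨0, hN⟩, Finset.mem_univ _⟩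
    have hM : 0 < d sm := lt_of_lt_of_le (by simp [hd]; linarith) (hsm s0 (Finset.mem_univ _))
    have h3 : d sm ≤ (∑ s', (Q ^ N) sm s') * d sm := by
      calc d sm ≤ ∑ s', (Q ^ N) sm s' * d s' := hiter N sm
        _ ≤ ∑ s', (Q ^ N) sm s' * d sm :=
            Finset.sum_le_sum fun j _ =>
              mul_le_mul_of_nonneg_left (hsm j (Finset.mem_univ _)) (hQnn N sm j)
        _ = (∑ s', (Q ^ N) sm s') * d sm := by rw [Finset.sum_mul]
    have h4 : (∑ s', (Q ^ N) sm s') * d sm < 1 * d sm :=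
      mul_lt_mul_of_pos_right (hproper π sm) hM
    linarith
  refine ⟨h1, h2, ?_⟩
  intro x hx hsum
  have hle := h2 x hx
  funext s
  have hzero : ∑ s', (J s' - x s') = 0 := by
    rw [Finset.sum_sub_distrib]; linarith
  have := (Finset.sum_eq_zero_iff_of_nonneg
    (fun j _ => sub_nonneg.mpr (hle j))).mp hzero s (Finset.mem_univ s)
  linarith [sub_eq_zero.mp this]
end

section
/- Let P be an N×N real matrix with all entries nonnegative and every row sum at most 1. If every row of the matrix power P^N has sum strictly less than 1, then the powers P^k converge entrywise to the zero matrix as k → ∞; equivalently, every complex eigenvalue of P has modulus strictly less than 1. -/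
open Filter Topology

/-!
For entrywise nonnegative `P`, the `∞`-operator norm of `P ^ N` is its largest row sum, so
`‖P ^ N‖ < 1`; in any normed ring this forces `P ^ k → 0`, since
`P ^ (q * N + r) = P ^ r * (P ^ N) ^ q`. If `v` is an eigenvector for `μ`, then
`μ ^ k • v = P ^ k *ᵥ v → 0`, hence `‖μ‖ < 1`.
-/

theorem tendsto_pow_atTop_nhds_zero_of_norm_pow_lt_one {R : Type*} [SeminormedRing R] {a : R}
    {N : ℕ} (h : ‖a ^ N‖ < 1) : Tendsto (a ^ ·) atTop (𝓝 0) := by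
  rw [tendsto_zero_iff_norm_tendsto_zero]
  rcases N.eq_zero_or_pos with rfl | hN
  · -- `‖x‖ ≤ ‖x‖ * ‖1‖` with `‖1‖ < 1` forces every norm to vanish
    have hzero (x : R) : ‖x‖ = 0 := by
      have := norm_mul_le x 1
      rw [pow_zero] at h
      rw [mul_one] at this
      nlinarith [norm_nonneg x]
    simp only [hzero, tendsto_const_nhds]
  · set C := ∑ r ∈ Finset.range N, ‖a ^ r‖
    have hbound (k : ℕ) : ‖a ^ k‖ ≤ C * ‖(a ^ N) ^ (k / N)‖ := by
      calc ‖a ^ k‖ = ‖a ^ (k % N) * (a ^ N) ^ (k / N)‖ := by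
            rw [← pow_mul, ← pow_add, Nat.mod_add_div]
        _ ≤ ‖a ^ (k % N)‖ * ‖(a ^ N) ^ (k / N)‖ := norm_mul_le _ _
        _ ≤ C * ‖(a ^ N) ^ (k / N)‖ := by
            gcongr
            exact Finset.single_le_sum (fun r _ => norm_nonneg (a ^ r))
              (Finset.mem_range.mpr (Nat.mod_lt k hN))
    have hlim : Tendsto (fun k => C * ‖(a ^ N) ^ (k / N)‖) atTop (𝓝 0) := by
      simpa using ((tendsto_pow_atTop_nhds_zero_of_norm_lt_one h).comp
        (Nat.tendsto_div_const_atTop hN.ne')).norm.const_mul C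
    exact squeeze_zero (fun k => norm_nonneg _) hbound hlim

namespace Matrix

open scoped Matrix.Norms.Operator

theorem linfty_opNorm_lt_one_of_nonneg {m n : Type*} [Fintype m] [Fintype n] {A : Matrix m n ℝ}
    (hA : ∀ i j, 0 ≤ A i j) (h : ∀ i, ∑ j, A i j < 1) : ‖A‖ < 1 := by
  rw [linfty_opNorm_def, NNReal.coe_lt_one, Finset.sup_lt_iff zero_lt_one]
  intro i _
  rw [← NNReal.coe_lt_one, NNReal.coe_sum]
  simpa only [coe_nnnorm, Real.norm_of_nonneg (hA i _)] using h i

variable {n : Type*} [Fintype n] [DecidableEq n]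

theorem tendsto_pow_atTop_nhds_zero_of_nonneg_of_sum_pow_lt_one {A : Matrix n n ℝ}
    (hA : ∀ i j, 0 ≤ A i j) {N : ℕ} (hN : ∀ i, ∑ j, (A ^ N) i j < 1) :
    Tendsto (A ^ ·) atTop (𝓝 0) :=
  tendsto_pow_atTop_nhds_zero_of_norm_pow_lt_one
    (linfty_opNorm_lt_one_of_nonneg (pow_apply_nonneg hA N) hN)

theorem norm_lt_one_of_tendsto_pow_of_isRoot_charpoly {K : Type*} [NormedField K]
    {A : Matrix n n K} (hA : Tendsto (A ^ ·) atTop (𝓝 0)) {μ : K} (hμ : A.charpoly.IsRoot μ) :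
    ‖μ‖ < 1 := by
  have hμ' : Module.End.HasEigenvalue (toLin' A) μ := by
    rwa [Module.End.hasEigenvalue_iff_isRoot_charpoly, charpoly_toLin']
  obtain ⟨v, hv⟩ := hμ'.exists_hasEigenvector
  obtain ⟨i, hi⟩ := Function.ne_iff.mp hv.2
  have hpow (k : ℕ) : (A ^ k *ᵥ v) i = μ ^ k * v i := by
    rw [← toLin'_apply, toLin'_pow]
    exact congrFun (hv.pow_apply k) i
  have hlim : Tendsto (fun k => μ ^ k * v i) atTop (𝓝 0) := by
    simpa [hpow] using
      (((continuous_id.matrix_mulVec (continuous_const (y := v))).tendsto 0).comp hA).apply_nhds i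
  rw [← tendsto_pow_atTop_nhds_zero_iff_norm_lt_one]
  simpa [mul_inv_cancel_right₀ hi] using hlim.mul_const (v i)⁻¹

end Matrix

theorem stmt_7_general (N : ℕ) (P : Matrix (Fin N) (Fin N) ℝ)
    (hP_nonneg : ∀ i j, 0 ≤ P i j)
    (hproper : ∀ i, ∑ j, (P ^ N) i j < 1) :
    (∀ i j, Tendsto (fun k => (P ^ k) i j) atTop (𝓝 0)) ∧
    (∀ μ : ℂ, (P.map (algebraMap ℝ ℂ)).charpoly.IsRoot μ → ‖μ‖ < 1) := by
  have hlim := Matrix.tendsto_pow_atTop_nhds_zero_of_nonneg_of_sum_pow_lt_one hP_nonneg hproper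
  refine ⟨fun i j => (hlim.apply_nhds i).apply_nhds j, fun μ hμ => ?_⟩
  refine Matrix.norm_lt_one_of_tendsto_pow_of_isRoot_charpoly ?_ hμ
  have hmap : Tendsto (fun k => (P ^ k).map (algebraMap ℝ ℂ)) atTop (𝓝 0) := by
    simpa [Function.comp_def] using
      ((continuous_id.matrix_map (continuous_algebraMap ℝ ℂ)).tendsto 0).comp hlim
  simpa only [Matrix.map_pow] using hmap

theorem stmt_7 (N : ℕ) (P : Matrix (Fin N) (Fin N) ℝ)
    (hP_nonneg : ∀ i j, 0 ≤ P i j)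
    (hP_rows : ∀ i, ∑ j, P i j ≤ 1)
    (hproper : ∀ i, ∑ j, (P ^ N) i j < 1) :
    (∀ i j, Tendsto (fun k => (P ^ k) i j) atTop (𝓝 0)) ∧
    (∀ μ : ℂ, (P.map (algebraMap ℝ ℂ)).charpoly.IsRoot μ → ‖μ‖ < 1) :=
  stmt_7_general N P hP_nonneg hproper
end

section
/- Consider a finite state space Fin N (N ≥ 1), a nonempty finite action set A s for each state s, costs c : (s : Fin N) → A s → ℝ, an estimated substochastic transition function P̂ : (s : Fin N) → A s → Fin N → ℝ (P̂ s a s' ≥ 0 and ∑_{s'} P̂ s a s' ≤ 1), and radii ε : (s : Fin N) → A s → ℝ with ε s a > 0. Let D : (Fin N → ℝ) → (Fin N → ℝ) → ℝ be nonnegative, jointly convex, positively homogeneous (D (t•u) (t•v) = t · D u v for all t ≥ 0) and satisfy D u u = 0. For each (s,a) set 𝒫(s,a) = {P̃ : Fin N → ℝ | P̃ ≥ 0, ∑_{s'} P̃ s' ≤ 1, D P̃ (P̂ s a) ≤ ε s a} and CB_min(s,a)(x) = inf over P̃ ∈ 𝒫(s,a) of ∑_{s'} x s' · (P̃ s' −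 P̂ s a s'); call x : Fin N → ℝ superharmonic for the optimistic operator if x s ≤ c s a + ∑_{s'} P̂ s a s' · x s' + CB_min(s,a)(x) for all s, a. Suppose there exists q : (s : Fin N) → A s → ℝ with q s a > 0 for all (s,a) and ∑_{a} q s a = 1 + ∑_{s'} ∑_{a} q s' a · P̂ s' a s for every s. Then strong duality holds: the supremum of ∑_s x s over all x superharmonic for the optimistic operator equals the infimum of ∑_{s} ∑_{a} q s a · c s a over all q : (s : Fin N) → A s → ℝ with q ≥ 0 and all choices P̃ : (s : Fin N) → A s → Fin N → ℝ with P̃ s a ∈ 𝒫(s,a) for every (s,a), subject to the flow constraints ∑_{a} q s a = 1 + ∑_{s'} ∑_{a} q s' a · P̃ s' a s for every s. -/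
set_option linter.unusedSectionVars false

namespace Stmt8

variable {N : ℕ} {A : Fin N → Type} [∀ s, Fintype (A s)] [∀ s, Nonempty (A s)]
variable (Phat : ∀ s, A s → Fin N → ℝ) (ε : ∀ s, A s → ℝ)
variable (D : (Fin N → ℝ) → (Fin N → ℝ) → ℝ)

def Kset (s : Fin N) (a : A s) : Set (Fin N → ℝ) :=
  {P | (∀ s', 0 ≤ P s') ∧ (∑ s', P s') ≤ 1 ∧ D P (Phat s a) ≤ ε s a}

noncomputable def mfun (x : Fin N → ℝ) (s : Fin N) (a : A s) : ℝ :=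
  sInf ((fun P : Fin N → ℝ => ∑ s', P s' * x s') '' Kset Phat ε D s a)

section basic
variable {Phat ε D}

lemma sum_mul_le_norm {s : Fin N} {a : A s} {P : Fin N → ℝ} (hP : P ∈ Kset Phat ε D s a)
    (z : Fin N → ℝ) : |∑ s', P s' * z s'| ≤ ‖z‖ := by
  calc |∑ s', P s' * z s'| ≤ ∑ s', |P s' * z s'| := Finset.abs_sum_le_sum_abs _ _
    _ ≤ ∑ s', P s' * ‖z‖ := by
        refine Finset.sum_le_sum fun s' _ => ?_
        rw [abs_mul, abs_of_nonneg (hP.1 s')]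
        exact mul_le_mul_of_nonneg_left (norm_le_pi_norm z s') (hP.1 s')
    _ = (∑ s', P s') * ‖z‖ := by rw [Finset.sum_mul]
    _ ≤ 1 * ‖z‖ := mul_le_mul_of_nonneg_right hP.2.1 (norm_nonneg z)
    _ = ‖z‖ := one_mul _

lemma Phat_mem (hP_nonneg : ∀ s a s', 0 ≤ Phat s a s') (hP_sub : ∀ s a, ∑ s', Phat s a s' ≤ 1)
    (hε : ∀ s a, 0 < ε s a) (hD_refl : ∀ u, D u u = 0) (s : Fin N) (a : A s) :
    Phat s a ∈ Kset Phat ε D s a :=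
  ⟨hP_nonneg s a, hP_sub s a, by rw [hD_refl]; exact (hε s a).le⟩

lemma mfun_nonempty (hP_nonneg : ∀ s a s', 0 ≤ Phat s a s') (hP_sub : ∀ s a, ∑ s', Phat s a s' ≤ 1)
    (hε : ∀ s a, 0 < ε s a) (hD_refl : ∀ u, D u u = 0) (x : Fin N → ℝ) (s : Fin N) (a : A s) :
    ((fun P : Fin N → ℝ => ∑ s', P s' * x s') '' Kset Phat ε D s a).Nonempty :=
  ⟨_, Set.mem_image_of_mem _ (Phat_mem hP_nonneg hP_sub hε hD_refl s a)⟩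

lemma mfun_bddBelow (x : Fin N → ℝ) (s : Fin N) (a : A s) :
    BddBelow ((fun P : Fin N → ℝ => ∑ s', P s' * x s') '' Kset Phat ε D s a) := by
  refine ⟨-‖x‖, fun v hv => ?_⟩
  obtain ⟨P, hP, rfl⟩ := hv
  exact neg_le_of_abs_le (sum_mul_le_norm hP x) |>.trans_eq' rfl

lemma mfun_le_of_mem {s : Fin N} {a : A s} {P : Fin N → ℝ} (hP : P ∈ Kset Phat ε D s a)
    (x : Fin N → ℝ) : mfun Phat ε D x s a ≤ ∑ s', P s' * x s' :=
  csInf_le (mfun_bddBelow x s a) (Set.mem_image_of_mem _ hP)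

end basic

end Stmt8

namespace Stmt8

variable {N : ℕ} {A : Fin N → Type} [∀ s, Fintype (A s)] [∀ s, Nonempty (A s)]
variable {Phat : ∀ s, A s → Fin N → ℝ} {ε : ∀ s, A s → ℝ}
variable {D : (Fin N → ℝ) → (Fin N → ℝ) → ℝ}

lemma abs_mfun_le (hP_nonneg : ∀ s a s', 0 ≤ Phat s a s') (hP_sub : ∀ s a, ∑ s', Phat s a s' ≤ 1)
    (hε : ∀ s a, 0 < ε s a) (hD_refl : ∀ u, D u u = 0) (x : Fin N → ℝ) (s : Fin N) (a : A s) :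
    |mfun Phat ε D x s a| ≤ ‖x‖ := by
  rw [abs_le]
  constructor
  · refine le_csInf (mfun_nonempty hP_nonneg hP_sub hε hD_refl x s a) fun v hv => ?_
    obtain ⟨P, hP, rfl⟩ := hv
    exact neg_le_of_abs_le (sum_mul_le_norm hP x)
  · exact (mfun_le_of_mem (Phat_mem hP_nonneg hP_sub hε hD_refl s a) x).trans
      (le_of_abs_le (sum_mul_le_norm (Phat_mem hP_nonneg hP_sub hε hD_refl s a) x))

lemma mfun_lipschitz (hP_nonneg : ∀ s a s', 0 ≤ Phat s a s')
    (hP_sub : ∀ s a, ∑ s', Phat s a s' ≤ 1)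
    (hε : ∀ s a, 0 < ε s a) (hD_refl : ∀ u, D u u = 0) (x y : Fin N → ℝ) (s : Fin N) (a : A s) :
    |mfun Phat ε D x s a - mfun Phat ε D y s a| ≤ ‖x - y‖ := by
  have key : ∀ u v : Fin N → ℝ, mfun Phat ε D u s a ≤ mfun Phat ε D v s a + ‖u - v‖ := by
    intro u v
    rw [← sub_le_iff_le_add]
    refine le_csInf (mfun_nonempty hP_nonneg hP_sub hε hD_refl v s a) fun w hw => ?_
    obtain ⟨P, hP, rfl⟩ := hw
    rw [sub_le_iff_le_add]
    have h1 : mfun Phat ε D u s a ≤ ∑ s', P s' * u s' := mfun_le_of_mem hP u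
    have h2 : ∑ s', P s' * u s' - ∑ s', P s' * v s' ≤ ‖u - v‖ := by
      rw [← Finset.sum_sub_distrib]
      have : ∑ s', (P s' * u s' - P s' * v s') = ∑ s', P s' * (u - v) s' := by
        refine Finset.sum_congr rfl fun s' _ => ?_
        simp [mul_sub]
      rw [this]
      exact le_of_abs_le (sum_mul_le_norm hP (u - v))
    linarith
  rw [abs_sub_le_iff]
  constructor
  · have := key x y; linarith
  · have := key y x; rw [norm_sub_rev] at this; linarith

lemma mix_mem {s : Fin N} {a : A s} {P1 P2 : Fin N → ℝ} (hP1 : P1 ∈ Kset Phat ε D s a)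
    (hP2 : P2 ∈ Kset Phat ε D s a)
    (hD_convex : ∀ (u₁ v₁ u₂ v₂ : Fin N → ℝ) (t : ℝ), 0 ≤ t → t ≤ 1 →
      D (t • u₁ + (1 - t) • u₂) (t • v₁ + (1 - t) • v₂) ≤
        t * D u₁ v₁ + (1 - t) * D u₂ v₂)
    (hε : ∀ s a, 0 < ε s a) {θ : ℝ} (hθ0 : 0 ≤ θ) (hθ1 : θ ≤ 1) :
    (fun s' => θ * P1 s' + (1 - θ) * P2 s') ∈ Kset Phat ε D s a := by
  have h1θ : (0:ℝ) ≤ 1 - θ := by linarith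
  refine ⟨fun s' => add_nonneg (mul_nonneg hθ0 (hP1.1 s')) (mul_nonneg h1θ (hP2.1 s')), ?_, ?_⟩
  · have : ∑ s', (θ * P1 s' + (1 - θ) * P2 s') = θ * ∑ s', P1 s' + (1 - θ) * ∑ s', P2 s' := by
      rw [Finset.sum_add_distrib, Finset.mul_sum, Finset.mul_sum]
    rw [this]
    calc θ * ∑ s', P1 s' + (1 - θ) * ∑ s', P2 s' ≤ θ * 1 + (1 - θ) * 1 := by
          refine add_le_add (mul_le_mul_of_nonneg_left hP1.2.1 hθ0)
            (mul_le_mul_of_nonneg_left hP2.2.1 h1θ)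
      _ = 1 := by ring
  · have heq : (fun s' => θ * P1 s' + (1 - θ) * P2 s') = θ • P1 + (1 - θ) • P2 := by
      funext s'; simp [smul_eq_mul]
    have heq2 : Phat s a = θ • Phat s a + (1 - θ) • Phat s a := by
      funext s'; simp [smul_eq_mul]; ring
    rw [heq]
    calc D (θ • P1 + (1 - θ) • P2) (Phat s a)
        = D (θ • P1 + (1 - θ) • P2) (θ • Phat s a + (1 - θ) • Phat s a) := by rw [← heq2]
      _ ≤ θ * D P1 (Phat s a) + (1 - θ) * D P2 (Phat s a) :=
          hD_convex _ _ _ _ θ hθ0 hθ1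
      _ ≤ θ * ε s a + (1 - θ) * ε s a := by
          refine add_le_add (mul_le_mul_of_nonneg_left hP1.2.2 hθ0)
            (mul_le_mul_of_nonneg_left hP2.2.2 h1θ)
      _ = ε s a := by ring

lemma smul_Phat_mem (hP_nonneg : ∀ s a s', 0 ≤ Phat s a s')
    (hP_sub : ∀ s a, ∑ s', Phat s a s' ≤ 1)
    (hD_convex : ∀ (u₁ v₁ u₂ v₂ : Fin N → ℝ) (t : ℝ), 0 ≤ t → t ≤ 1 →
      D (t • u₁ + (1 - t) • u₂) (t • v₁ + (1 - t) • v₂) ≤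
        t * D u₁ v₁ + (1 - t) * D u₂ v₂)
    (hD_refl : ∀ u, D u u = 0)
    {t : ℝ} (ht0 : 0 ≤ t) (ht1 : t ≤ 1) {s : Fin N} {a : A s}
    (htε : (1 - t) * D 0 (Phat s a) ≤ ε s a) :
    (fun s' => t * Phat s a s') ∈ Kset Phat ε D s a := by
  have h1t : (0:ℝ) ≤ 1 - t := by linarith
  refine ⟨fun s' => mul_nonneg ht0 (hP_nonneg s a s'), ?_, ?_⟩
  · rw [← Finset.mul_sum]
    calc t * ∑ s', Phat s a s' ≤ 1 * 1 :=
        mul_le_mul ht1 (hP_sub s a) (Finset.sum_nonneg fun s' _ => hP_nonneg s a s') one_pos.le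
      _ = 1 := one_mul 1
  · have heq : (fun s' => t * Phat s a s') = t • Phat s a + (1 - t) • (0 : Fin N → ℝ) := by
      funext s'; simp [smul_eq_mul]
    have heq2 : Phat s a = t • Phat s a + (1 - t) • Phat s a := by
      funext s'; simp [smul_eq_mul]; ring
    rw [heq]
    calc D (t • Phat s a + (1 - t) • (0 : Fin N → ℝ)) (Phat s a)
        = D (t • Phat s a + (1 - t) • (0 : Fin N → ℝ))
            (t • Phat s a + (1 - t) • Phat s a) := by rw [← heq2]
      _ ≤ t * D (Phat s a) (Phat s a) + (1 - t) * D 0 (Phat s a) := hD_convex _ _ _ _ t ht0 ht1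
      _ = (1 - t) * D 0 (Phat s a) := by rw [hD_refl]; ring
      _ ≤ ε s a := htε

end Stmt8

namespace Stmt8

variable {N : ℕ} {A : Fin N → Type} [∀ s, Fintype (A s)] [∀ s, Nonempty (A s)]
variable {Phat : ∀ s, A s → Fin N → ℝ} {ε : ∀ s, A s → ℝ}
variable {D : (Fin N → ℝ) → (Fin N → ℝ) → ℝ}

lemma sInf_V_eq (hP_nonneg : ∀ s a s', 0 ≤ Phat s a s') (hP_sub : ∀ s a, ∑ s', Phat s a s' ≤ 1)
    (hε : ∀ s a, 0 < ε s a) (hD_refl : ∀ u, D u u = 0) (x : Fin N → ℝ) (s : Fin N) (a : A s) :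
    sInf {v : ℝ | ∃ Ptil : Fin N → ℝ, (∀ s', 0 ≤ Ptil s') ∧ (∑ s', Ptil s') ≤ 1 ∧
        D Ptil (Phat s a) ≤ ε s a ∧ v = ∑ s', x s' * (Ptil s' - Phat s a s')} =
      mfun Phat ε D x s a - ∑ s', Phat s a s' * x s' := by
  set C := ∑ s', Phat s a s' * x s' with hC
  have hrearr : ∀ P : Fin N → ℝ,
      ∑ s', x s' * (P s' - Phat s a s') = (∑ s', P s' * x s') - C := by
    intro P
    rw [hC, ← Finset.sum_sub_distrib]
    exact Finset.sum_congr rfl fun s' _ => by ring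
  have hVmem : ∀ v, (v ∈ {v : ℝ | ∃ Ptil : Fin N → ℝ, (∀ s', 0 ≤ Ptil s') ∧
      (∑ s', Ptil s') ≤ 1 ∧ D Ptil (Phat s a) ≤ ε s a ∧
      v = ∑ s', x s' * (Ptil s' - Phat s a s')}) ↔
      ∃ P ∈ Kset Phat ε D s a, v = (∑ s', P s' * x s') - C := by
    intro v
    constructor
    · rintro ⟨P, h1, h2, h3, rfl⟩; exact ⟨P, ⟨h1, h2, h3⟩, hrearr P⟩
    · rintro ⟨P, hP, rfl⟩; exact ⟨P, hP.1, hP.2.1, hP.2.2, (hrearr P).symm⟩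
  have hne : {v : ℝ | ∃ Ptil : Fin N → ℝ, (∀ s', 0 ≤ Ptil s') ∧ (∑ s', Ptil s') ≤ 1 ∧
      D Ptil (Phat s a) ≤ ε s a ∧ v = ∑ s', x s' * (Ptil s' - Phat s a s')}.Nonempty := by
    refine ⟨_, (hVmem _).2 ⟨Phat s a, Phat_mem hP_nonneg hP_sub hε hD_refl s a, rfl⟩⟩
  have hbdd : BddBelow {v : ℝ | ∃ Ptil : Fin N → ℝ, (∀ s', 0 ≤ Ptil s') ∧
      (∑ s', Ptil s') ≤ 1 ∧ D Ptil (Phat s a) ≤ ε s a ∧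
      v = ∑ s', x s' * (Ptil s' - Phat s a s')} := by
    refine ⟨-‖x‖ - C, fun v hv => ?_⟩
    obtain ⟨P, hP, rfl⟩ := (hVmem v).1 hv
    have := neg_le_of_abs_le (sum_mul_le_norm hP x)
    linarith
  apply le_antisymm
  · rw [le_sub_iff_add_le]
    refine le_csInf (mfun_nonempty hP_nonneg hP_sub hε hD_refl x s a) fun w hw => ?_
    obtain ⟨P, hP, rfl⟩ := hw
    have : ((∑ s', P s' * x s') - C) ∈ {v : ℝ | ∃ Ptil : Fin N → ℝ, (∀ s', 0 ≤ Ptil s') ∧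
        (∑ s', Ptil s') ≤ 1 ∧ D Ptil (Phat s a) ≤ ε s a ∧
        v = ∑ s', x s' * (Ptil s' - Phat s a s')} := (hVmem _).2 ⟨P, hP, rfl⟩
    have h2 := csInf_le hbdd this
    simp only at h2 ⊢
    linarith
  · refine le_csInf hne fun v hv => ?_
    obtain ⟨P, hP, rfl⟩ := (hVmem v).1 hv
    have := mfun_le_of_mem hP x
    linarith

end Stmt8

namespace Stmt8

lemma abs_inf'_sub_inf'_le {α : Type*} [Fintype α] [Nonempty α] (f g : α → ℝ) {δ : ℝ}
    (h : ∀ a, |f a - g a| ≤ δ) :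
    |Finset.univ.inf' Finset.univ_nonempty f - Finset.univ.inf' Finset.univ_nonempty g| ≤ δ := by
  have key : ∀ u v : α → ℝ, (∀ a, |u a - v a| ≤ δ) →
      Finset.univ.inf' Finset.univ_nonempty u ≤ Finset.univ.inf' Finset.univ_nonempty v + δ := by
    intro u v huv
    rw [← sub_le_iff_le_add]
    refine Finset.le_inf' _ _ fun b _ => ?_
    have h1 : Finset.univ.inf' Finset.univ_nonempty u ≤ u b := Finset.inf'_le _ (Finset.mem_univ b)
    have h2 := abs_le.1 (huv b)
    linarith [h2.2]
  rw [abs_sub_le_iff]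
  constructor
  · have := key f g h; linarith
  · have := key g f fun a => by rw [abs_sub_comm]; exact h a
    linarith

variable {N : ℕ} {A : Fin N → Type} [∀ s, Fintype (A s)] [∀ s, Nonempty (A s)]
variable (c : ∀ s, A s → ℝ)
variable (Phat : ∀ s, A s → Fin N → ℝ) (ε : ∀ s, A s → ℝ)
variable (D : (Fin N → ℝ) → (Fin N → ℝ) → ℝ)

noncomputable def TT (t θ : ℝ) (x : Fin N → ℝ) : Fin N → ℝ := fun s =>
  Finset.univ.inf' Finset.univ_nonempty fun a : A s =>
    c s a + θ * mfun Phat ε D x s a + (1 - θ) * t * ∑ s', Phat s a s' * x s'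

variable {c Phat ε D}

lemma TT_contracting (hP_nonneg : ∀ s a s', 0 ≤ Phat s a s')
    (hP_sub : ∀ s a, ∑ s', Phat s a s' ≤ 1)
    (hε : ∀ s a, 0 < ε s a) (hD_refl : ∀ u, D u u = 0)
    {t θ : ℝ} (ht0 : 0 ≤ t) (ht1 : t < 1) (hθ0 : 0 ≤ θ) (hθ1 : θ < 1) :
    ContractingWith (θ + (1 - θ) * t).toNNReal (TT c Phat ε D t θ) := by
  have hρ0 : (0:ℝ) ≤ θ + (1 - θ) * t := by nlinarith
  have hρ1 : θ + (1 - θ) * t < 1 := by nlinarith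
  constructor
  · rw [← NNReal.coe_lt_coe, Real.coe_toNNReal _ hρ0]; exact hρ1
  · refine LipschitzWith.of_dist_le_mul fun x y => ?_
    rw [Real.coe_toNNReal _ hρ0]
    rw [dist_pi_le_iff (by positivity)]
    intro s
    rw [Real.dist_eq]
    refine abs_inf'_sub_inf'_le _ _ fun a => ?_
    have hm := mfun_lipschitz hP_nonneg hP_sub hε hD_refl x y s a
    have hsum : |(∑ s', Phat s a s' * x s') - ∑ s', Phat s a s' * y s'| ≤ ‖x - y‖ := by
      rw [← Finset.sum_sub_distrib]
      have : ∑ s', (Phat s a s' * x s' - Phat s a s' * y s')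
          = ∑ s', Phat s a s' * (x - y) s' :=
        Finset.sum_congr rfl fun s' _ => by simp [mul_sub]
      rw [this]
      exact sum_mul_le_norm (Phat_mem hP_nonneg hP_sub hε hD_refl s a) (x - y)
    have hd : dist x y = ‖x - y‖ := dist_eq_norm x y
    have habs : |(c s a + θ * mfun Phat ε D x s a + (1 - θ) * t * ∑ s', Phat s a s' * x s')
        - (c s a + θ * mfun Phat ε D y s a + (1 - θ) * t * ∑ s', Phat s a s' * y s')|
        = |θ * (mfun Phat ε D x s a - mfun Phat ε D y s a)
            + (1 - θ) * t * ((∑ s', Phat s a s' * x s') - ∑ s', Phat s a s' * y s')| := by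
      ring_nf
    rw [habs, hd]
    calc |θ * (mfun Phat ε D x s a - mfun Phat ε D y s a)
            + (1 - θ) * t * ((∑ s', Phat s a s' * x s') - ∑ s', Phat s a s' * y s')|
        ≤ |θ * (mfun Phat ε D x s a - mfun Phat ε D y s a)|
          + |(1 - θ) * t * ((∑ s', Phat s a s' * x s') - ∑ s', Phat s a s' * y s')| :=
          abs_add_le _ _
      _ ≤ θ * ‖x - y‖ + (1 - θ) * t * ‖x - y‖ := by
          rw [abs_mul, abs_mul]
          refine add_le_add ?_ ?_
          · rw [abs_of_nonneg hθ0]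
            exact mul_le_mul_of_nonneg_left hm hθ0
          · rw [abs_of_nonneg (by nlinarith : (0:ℝ) ≤ (1 - θ) * t)]
            exact mul_le_mul_of_nonneg_left hsum (by nlinarith)
      _ = (θ + (1 - θ) * t) * ‖x - y‖ := by ring

end Stmt8

namespace Stmt8

variable {N : ℕ} {A : Fin N → Type} [∀ s, Fintype (A s)] [∀ s, Nonempty (A s)]
variable {c : ∀ s, A s → ℝ}
variable {Phat : ∀ s, A s → Fin N → ℝ} {ε : ∀ s, A s → ℝ}
variable {D : (Fin N → ℝ) → (Fin N → ℝ) → ℝ}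

lemma weak_duality {x : Fin N → ℝ} (hx : ∀ s (a : A s), x s ≤ c s a + mfun Phat ε D x s a)
    {q : ∀ s, A s → ℝ} {Ptil : ∀ s, A s → Fin N → ℝ}
    (hq : ∀ s a, 0 ≤ q s a) (hPt : ∀ s a, Ptil s a ∈ Kset Phat ε D s a)
    (hflow : ∀ s, ∑ a, q s a = 1 + ∑ s', ∑ a, q s' a * Ptil s' a s) :
    ∑ s, x s ≤ ∑ s, ∑ a, q s a * c s a := by
  have h1 : ∀ s (a : A s), q s a * x s ≤ q s a * c s a + q s a * ∑ s', Ptil s a s' * x s' := by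
    intro s a
    have := mfun_le_of_mem (hPt s a) x
    have hx' : x s ≤ c s a + ∑ s', Ptil s a s' * x s' := (hx s a).trans (by linarith)
    nlinarith [hq s a, mul_le_mul_of_nonneg_left hx' (hq s a)]
  have h2 : ∑ s, ∑ a, q s a * x s ≤
      ∑ s, ∑ a, q s a * c s a + ∑ s, ∑ a, q s a * ∑ s', Ptil s a s' * x s' := by
    rw [← Finset.sum_add_distrib]
    refine Finset.sum_le_sum fun s _ => ?_
    rw [← Finset.sum_add_distrib]
    exact Finset.sum_le_sum fun a _ => h1 s a
  have h3 : ∑ s, ∑ a, q s a * x s = ∑ s, x s + ∑ s, ∑ a, q s a * ∑ s', Ptil s a s' * x s' := by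
    calc ∑ s, ∑ a, q s a * x s = ∑ s, (∑ a, q s a) * x s := by
          refine Finset.sum_congr rfl fun s _ => ?_; rw [Finset.sum_mul]
      _ = ∑ s, (1 + ∑ s', ∑ a, q s' a * Ptil s' a s) * x s := by
          refine Finset.sum_congr rfl fun s _ => ?_; rw [hflow s]
      _ = ∑ s, x s + ∑ s, ∑ s', ∑ a, q s' a * Ptil s' a s * x s := by
          rw [← Finset.sum_add_distrib]
          refine Finset.sum_congr rfl fun s _ => ?_
          rw [add_mul, one_mul, Finset.sum_mul]
          congr 1
          refine Finset.sum_congr rfl fun s' _ => ?_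
          rw [Finset.sum_mul]
      _ = ∑ s, x s + ∑ s, ∑ a, q s a * ∑ s', Ptil s a s' * x s' := by
          congr 1
          rw [Finset.sum_comm]
          refine Finset.sum_congr rfl fun s _ => ?_
          rw [Finset.sum_comm]
          refine Finset.sum_congr rfl fun a _ => ?_
          rw [Finset.mul_sum]
          exact Finset.sum_congr rfl fun s' _ => by ring
  linarith

end Stmt8

namespace Stmt8

variable {N : ℕ} {A : Fin N → Type} [∀ s, Fintype (A s)] [∀ s, Nonempty (A s)]
variable {c : ∀ s, A s → ℝ}
variable {Phat : ∀ s, A s → Fin N → ℝ} {ε : ∀ s, A s → ℝ}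
variable {D : (Fin N → ℝ) → (Fin N → ℝ) → ℝ}

open scoped ENNReal in
lemma l1_dist_eq (a b : PiLp 1 (fun _ : Fin N => ℝ)) : dist a b = ∑ i, |a i - b i| := by
  rw [PiLp.dist_eq_sum (p := (1:ℝ≥0∞)) (by simp)]
  simp [Real.dist_eq]

lemma dual_approx (hN : 0 < N)
    (hP_nonneg : ∀ s a s', 0 ≤ Phat s a s') (hP_sub : ∀ s a, ∑ s', Phat s a s' ≤ 1)
    (hε : ∀ s a, 0 < ε s a) (hD_refl : ∀ u, D u u = 0)
    (hD_convex : ∀ (u₁ v₁ u₂ v₂ : Fin N → ℝ) (t : ℝ), 0 ≤ t → t ≤ 1 →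
      D (t • u₁ + (1 - t) • u₂) (t • v₁ + (1 - t) • v₂) ≤
        t * D u₁ v₁ + (1 - t) * D u₂ v₂)
    {t θ : ℝ} (ht0 : 0 ≤ t) (ht1 : t < 1) (hθ0 : 0 ≤ θ) (hθ1 : θ < 1)
    (htK : ∀ s (a : A s), (fun s' => t * Phat s a s') ∈ Kset Phat ε D s a)
    {x : Fin N → ℝ} (hx : TT c Phat ε D t θ x = x)
    {δ : ℝ} (hδ : 0 < δ) :
    ∃ (q : ∀ s, A s → ℝ) (Ptil : ∀ s, A s → Fin N → ℝ),
      (∀ s a, 0 ≤ q s a) ∧ (∀ s a, Ptil s a ∈ Kset Phat ε D s a) ∧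
      (∀ s, ∑ a, q s a = 1 + ∑ s', ∑ a, q s' a * Ptil s' a s) ∧
      (∑ s, ∑ a, q s a * c s a) ≤ (∑ s, x s) + δ := by
  classical
  set ρ : ℝ := θ + (1 - θ) * t with hρ
  have hρ0 : (0:ℝ) ≤ ρ := by nlinarith
  have hρ1 : ρ < 1 := by nlinarith
  have hN' : (0:ℝ) < N := by exact_mod_cast hN
  set δ' : ℝ := δ * (1 - ρ) / N with hδ'def
  have hδ' : 0 < δ' := by
    apply div_pos (mul_pos hδ (by linarith)) hN'
  -- choose minimizing actions
  have hastar : ∀ s : Fin N, ∃ a : A s, TT c Phat ε D t θ x s =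
      c s a + θ * mfun Phat ε D x s a + (1 - θ) * t * ∑ s', Phat s a s' * x s' := by
    intro s
    obtain ⟨a, _, ha⟩ := Finset.exists_mem_eq_inf' (Finset.univ_nonempty)
      (fun a : A s => c s a + θ * mfun Phat ε D x s a + (1 - θ) * t * ∑ s', Phat s a s' * x s')
    exact ⟨a, ha⟩
  choose astar hastar using hastar
  -- choose near-minimizing kernels
  have hPd : ∀ (s : Fin N) (a : A s), ∃ P : Fin N → ℝ, P ∈ Kset Phat ε D s a ∧
      ∑ s', P s' * x s' < mfun Phat ε D x s a + δ' := by
    intro s a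
    obtain ⟨v, hv, hvlt⟩ := Real.lt_sInf_add_pos (mfun_nonempty hP_nonneg hP_sub hε hD_refl x s a) hδ'
    obtain ⟨P, hP, rfl⟩ := hv
    exact ⟨P, hP, hvlt⟩
  choose Pd hPdK hPdval using hPd
  -- the mixed kernels
  set Q : ∀ s, A s → Fin N → ℝ := fun s a => fun s' => θ * Pd s a s' + (1 - θ) * (t * Phat s a s')
    with hQdef
  have hQK : ∀ s a, Q s a ∈ Kset Phat ε D s a := fun s a =>
    mix_mem (hPdK s a) (htK s a) hD_convex hε hθ0 hθ1.le
  have hQnn : ∀ s a s', 0 ≤ Q s a s' := fun s a s' => (hQK s a).1 s'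
  have hQmass : ∀ s a, ∑ s', Q s a s' ≤ ρ := by
    intro s a
    have : ∑ s', Q s a s' = θ * (∑ s', Pd s a s') + (1 - θ) * t * ∑ s', Phat s a s' := by
      simp only [hQdef]
      rw [Finset.sum_add_distrib, ← Finset.mul_sum, ← Finset.mul_sum, ← Finset.mul_sum]
      ring
    rw [this, hρ]
    have h1 : θ * (∑ s', Pd s a s') ≤ θ * 1 := mul_le_mul_of_nonneg_left (hPdK s a).2.1 hθ0
    have h2 : (1 - θ) * t * ∑ s', Phat s a s' ≤ (1 - θ) * t * 1 :=
      mul_le_mul_of_nonneg_left (hP_sub s a) (by nlinarith)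
    nlinarith
  -- key inequality for chosen actions
  have hQx : ∀ s (a : A s), ∑ s', Q s a s' * x s' =
      θ * (∑ s', Pd s a s' * x s') + (1 - θ) * t * ∑ s', Phat s a s' * x s' := by
    intro s a
    simp only [hQdef]
    have hterm : ∀ s', (θ * Pd s a s' + (1 - θ) * (t * Phat s a s')) * x s'
        = θ * (Pd s a s' * x s') + (1 - θ) * t * (Phat s a s' * x s') := fun s' => by ring
    rw [Finset.sum_congr rfl fun s' _ => hterm s', Finset.sum_add_distrib,
      ← Finset.mul_sum, ← Finset.mul_sum]
  have hkey : ∀ s, c s (astar s) ≤ x s - (∑ s', Q s (astar s) s' * x s') + δ' := by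
    intro s
    have h1 : x s = c s (astar s) + θ * mfun Phat ε D x s (astar s)
        + (1 - θ) * t * ∑ s', Phat s (astar s) s' * x s' := by
      conv_lhs => rw [← hx]
      exact hastar s
    have h2 : θ * (∑ s', Pd s (astar s) s' * x s') ≤ θ * mfun Phat ε D x s (astar s) + θ * δ' := by
      have := hPdval s (astar s)
      nlinarith
    have h3 := hQx s (astar s)
    nlinarith [mul_le_mul_of_nonneg_right hθ1.le hδ'.le]
  -- construct the occupation weights via an ℓ¹ contraction
  set E := PiLp 1 (fun _ : Fin N => ℝ) with hE
  set G : E → E := fun w => (WithLp.equiv 1 (Fin N → ℝ)).symm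
      (fun s => 1 + ∑ s', w s' * Q s' (astar s') s) with hGdef
  have hGapp : ∀ (w : E) (s : Fin N), G w s = 1 + ∑ s', w s' * Q s' (astar s') s := by
    intro w s; rw [hGdef]; rfl
  have hGcontr : ContractingWith ρ.toNNReal G := by
    constructor
    · rw [← NNReal.coe_lt_coe, Real.coe_toNNReal _ hρ0]; exact hρ1
    · refine LipschitzWith.of_dist_le_mul fun w w' => ?_
      rw [Real.coe_toNNReal _ hρ0, l1_dist_eq, l1_dist_eq]
      calc ∑ s, |G w s - G w' s| = ∑ s, |∑ s', (w s' - w' s') * Q s' (astar s') s| := by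
            refine Finset.sum_congr rfl fun s _ => ?_
            rw [hGapp, hGapp]
            congr 1
            rw [add_sub_add_left_eq_sub, ← Finset.sum_sub_distrib]
            exact Finset.sum_congr rfl fun s' _ => by ring
        _ ≤ ∑ s, ∑ s', |w s' - w' s'| * Q s' (astar s') s := by
            refine Finset.sum_le_sum fun s _ => ?_
            refine (Finset.abs_sum_le_sum_abs _ _).trans ?_
            refine Finset.sum_le_sum fun s' _ => ?_
            rw [abs_mul, abs_of_nonneg (hQnn s' (astar s') s)]
        _ = ∑ s', |w s' - w' s'| * ∑ s, Q s' (astar s') s := by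
            rw [Finset.sum_comm]
            exact Finset.sum_congr rfl fun s' _ => by rw [Finset.mul_sum]
        _ ≤ ∑ s', |w s' - w' s'| * ρ := by
            refine Finset.sum_le_sum fun s' _ => ?_
            exact mul_le_mul_of_nonneg_left (hQmass s' (astar s')) (abs_nonneg _)
        _ = ρ * ∑ s', |w s' - w' s'| := by rw [← Finset.sum_mul]; ring
  set w : E := ContractingWith.fixedPoint G hGcontr with hwdef
  have hfp : G w = w := hGcontr.fixedPoint_isFixedPt
  have hwfix : ∀ s, w s = 1 + ∑ s', w s' * Q s' (astar s') s := by
    intro s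
    conv_lhs => rw [← hfp]
    exact hGapp w s
  have hwnn : ∀ s, 0 ≤ w s := by
    have hiter : ∀ n (s : Fin N), 0 ≤ (G^[n] 0) s := by
      intro n
      induction n with
      | zero =>
        intro s
        rw [Function.iterate_zero_apply]
        exact le_of_eq rfl
      | succ n ih =>
        intro s
        rw [Function.iterate_succ_apply', hGapp]
        have : 0 ≤ ∑ s', (G^[n] 0) s' * Q s' (astar s') s :=
          Finset.sum_nonneg fun s' _ => mul_nonneg (ih s') (hQnn s' (astar s') s)
        linarith
    intro s
    have htend := hGcontr.tendsto_iterate_fixedPoint 0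
    have hcoord : Filter.Tendsto (fun n => (G^[n] 0) s) Filter.atTop (nhds (w s)) := by
      rw [tendsto_iff_dist_tendsto_zero]
      have hle : ∀ n, dist ((G^[n] 0) s) (w s) ≤ dist (G^[n] 0) w := by
        intro n
        rw [l1_dist_eq, Real.dist_eq]
        exact Finset.single_le_sum (f := fun i => |(G^[n] 0) i - w i|)
          (fun i _ => abs_nonneg _) (Finset.mem_univ s)
      refine squeeze_zero (fun n => dist_nonneg) hle ?_
      rw [← tendsto_iff_dist_tendsto_zero]
      exact htend
    exact ge_of_tendsto' hcoord (fun n => hiter n s)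
  -- the dual pair
  set q : ∀ s, A s → ℝ := fun s a => if a = astar s then w s else 0 with hqdef
  have hqnn : ∀ s a, 0 ≤ q s a := by
    intro s a
    simp only [hqdef]
    split
    · exact hwnn s
    · exact le_refl 0
  have hq_sum : ∀ s, ∑ a, q s a = w s := by
    intro s
    simp only [hqdef]
    rw [Finset.sum_ite_eq' Finset.univ (astar s) (fun _ => w s)]
    simp
  have hinner : ∀ (s' s : Fin N), ∑ a, q s' a * Q s' a s = w s' * Q s' (astar s') s := by
    intro s' s
    simp only [hqdef]
    have : ∀ a : A s', (if a = astar s' then w s' else 0) * Q s' a s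
        = if a = astar s' then w s' * Q s' (astar s') s else 0 := by
      intro a
      by_cases h : a = astar s'
      · subst h; simp
      · simp [h]
    rw [Finset.sum_congr rfl fun a _ => this a,
      Finset.sum_ite_eq' Finset.univ (astar s') (fun _ => w s' * Q s' (astar s') s)]
    simp
  have hflow : ∀ s, ∑ a, q s a = 1 + ∑ s', ∑ a, q s' a * Q s' a s := by
    intro s
    rw [hq_sum, hwfix s]
    congr 1
    exact Finset.sum_congr rfl fun s' _ => (hinner s' s).symm
  have hinnerc : ∀ s : Fin N, ∑ a, q s a * c s a = w s * c s (astar s) := by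
    intro s
    simp only [hqdef]
    have : ∀ a : A s, (if a = astar s then w s else 0) * c s a
        = if a = astar s then w s * c s (astar s) else 0 := by
      intro a
      by_cases h : a = astar s
      · subst h; simp
      · simp [h]
    rw [Finset.sum_congr rfl fun a _ => this a,
      Finset.sum_ite_eq' Finset.univ (astar s) (fun _ => w s * c s (astar s))]
    simp
  -- value estimate
  have hxw : ∑ s, w s * x s
      = ∑ s, x s + ∑ s, w s * ∑ s', Q s (astar s) s' * x s' := by
    calc ∑ s, w s * x s = ∑ s, (1 + ∑ s', w s' * Q s' (astar s') s) * x s :=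
          Finset.sum_congr rfl fun s _ => by rw [← hwfix s]
      _ = ∑ s, x s + ∑ s, ∑ s', w s' * (Q s' (astar s') s * x s) := by
          rw [← Finset.sum_add_distrib]
          refine Finset.sum_congr rfl fun s _ => ?_
          rw [add_mul, one_mul, Finset.sum_mul]
          congr 1
          exact Finset.sum_congr rfl fun s' _ => by ring
      _ = ∑ s, x s + ∑ s, w s * ∑ s', Q s (astar s) s' * x s' := by
          congr 1
          rw [Finset.sum_comm]
          exact Finset.sum_congr rfl fun s' _ => by rw [← Finset.mul_sum]
  have hWsum : ∑ s, w s ≤ N / (1 - ρ) := by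
    have h7 : ∑ s, w s = N + ∑ s', w s' * ∑ s, Q s' (astar s') s := by
      calc ∑ s, w s = ∑ s : Fin N, (1 + ∑ s', w s' * Q s' (astar s') s) :=
            Finset.sum_congr rfl fun s _ => hwfix s
        _ = N + ∑ s, ∑ s', w s' * Q s' (astar s') s := by
            rw [Finset.sum_add_distrib]
            congr 1
            simp
        _ = N + ∑ s', w s' * ∑ s, Q s' (astar s') s := by
            congr 1
            rw [Finset.sum_comm]
            exact Finset.sum_congr rfl fun s' _ => by rw [← Finset.mul_sum]
    have h8 : ∑ s', w s' * ∑ s, Q s' (astar s') s ≤ ρ * ∑ s', w s' := by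
      rw [Finset.mul_sum]
      refine Finset.sum_le_sum fun s' _ => ?_
      calc w s' * ∑ s, Q s' (astar s') s ≤ w s' * ρ :=
            mul_le_mul_of_nonneg_left (hQmass s' (astar s')) (hwnn s')
        _ = ρ * w s' := mul_comm _ _
    rw [le_div_iff₀ (by linarith : (0:ℝ) < 1 - ρ)]
    nlinarith
  have hwnn' : (0:ℝ) ≤ ∑ s, w s := Finset.sum_nonneg fun s _ => hwnn s
  have hval : ∑ s, ∑ a, q s a * c s a ≤ (∑ s, x s) + δ := by
    have h5 : ∑ s, w s * c s (astar s)
        ≤ ∑ s, w s * (x s - (∑ s', Q s (astar s) s' * x s') + δ') :=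
      Finset.sum_le_sum fun s _ => mul_le_mul_of_nonneg_left (hkey s) (hwnn s)
    have h6 : ∑ s, w s * (x s - (∑ s', Q s (astar s) s' * x s') + δ')
        = ∑ s, w s * x s - ∑ s, w s * (∑ s', Q s (astar s) s' * x s') + δ' * ∑ s, w s := by
      rw [Finset.mul_sum, ← Finset.sum_sub_distrib, ← Finset.sum_add_distrib]
      exact Finset.sum_congr rfl fun s _ => by ring
    have h9 : δ' * ∑ s, w s ≤ δ := by
      calc δ' * ∑ s, w s ≤ δ' * (N / (1 - ρ)) := mul_le_mul_of_nonneg_left hWsum hδ'.le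
        _ = δ := by
            have hNne : (N:ℝ) ≠ 0 := ne_of_gt hN'
            have hρne : (1:ℝ) - ρ ≠ 0 := by linarith
            rw [hδ'def]
            field_simp
    calc ∑ s, ∑ a, q s a * c s a = ∑ s, w s * c s (astar s) :=
          Finset.sum_congr rfl fun s _ => hinnerc s
      _ ≤ ∑ s, w s * x s - ∑ s, w s * (∑ s', Q s (astar s) s' * x s') + δ' * ∑ s, w s := by
          rw [← h6]; exact h5
      _ = ∑ s, x s + δ' * ∑ s, w s := by rw [hxw]; ring
      _ ≤ (∑ s, x s) + δ := by linarith
  exact ⟨q, Q, hqnn, hQK, hflow, hval⟩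

end Stmt8

namespace Stmt8

variable {N : ℕ} {A : Fin N → Type} [∀ s, Fintype (A s)] [∀ s, Nonempty (A s)]
variable {c : ∀ s, A s → ℝ}
variable {Phat : ∀ s, A s → Fin N → ℝ} {ε : ∀ s, A s → ℝ}
variable {D : (Fin N → ℝ) → (Fin N → ℝ) → ℝ}

lemma fixed_upper [Nonempty (Fin N)]
    (hP_nonneg : ∀ s a s', 0 ≤ Phat s a s') (hP_sub : ∀ s a, ∑ s', Phat s a s' ≤ 1)
    {t θ : ℝ} (ht0 : 0 ≤ t) (ht1 : t < 1) (hθ0 : 0 ≤ θ) (hθ1 : θ ≤ 1)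
    (htK : ∀ s (a : A s), (fun s' => t * Phat s a s') ∈ Kset Phat ε D s a)
    {x : Fin N → ℝ} (hx : TT c Phat ε D t θ x = x)
    {Cb : ℝ} (hCb : ∀ s a, c s a ≤ Cb) :
    ∀ s, x s ≤ max (Cb / (1 - t)) 0 := by
  set M := Finset.univ.sup' Finset.univ_nonempty x with hM
  obtain ⟨s0, _, hs0⟩ := Finset.exists_mem_eq_sup' (Finset.univ_nonempty) x
  set MP := max M 0 with hMP
  have hxM : ∀ s', x s' ≤ M := fun s' => Finset.le_sup' x (Finset.mem_univ s')
  have hMMP : (0:ℝ) ≤ MP := le_max_right _ _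
  have hstep : ∀ s (a : A s), ∑ s', Phat s a s' * x s' ≤ MP := by
    intro s a
    calc ∑ s', Phat s a s' * x s' ≤ ∑ s', Phat s a s' * MP := by
          refine Finset.sum_le_sum fun s' _ => ?_
          exact mul_le_mul_of_nonneg_left ((hxM s').trans (le_max_left _ _)) (hP_nonneg s a s')
      _ = (∑ s', Phat s a s') * MP := by rw [Finset.sum_mul]
      _ ≤ 1 * MP := mul_le_mul_of_nonneg_right (hP_sub s a) hMMP
      _ = MP := one_mul _
  have hub : ∀ s, x s ≤ Cb + t * MP := by
    intro s
    have ha : x s ≤ c s (Classical.arbitrary (A s))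
        + θ * mfun Phat ε D x s (Classical.arbitrary (A s))
        + (1 - θ) * t * ∑ s', Phat s (Classical.arbitrary (A s)) s' * x s' := by
      conv_lhs => rw [← hx]
      exact Finset.inf'_le _ (Finset.mem_univ _)
    set a := Classical.arbitrary (A s)
    have hm : mfun Phat ε D x s a ≤ t * MP := by
      have h1 := mfun_le_of_mem (htK s a) x
      have h2 : ∑ s', (fun s' => t * Phat s a s') s' * x s' = t * ∑ s', Phat s a s' * x s' := by
        rw [Finset.mul_sum]
        exact Finset.sum_congr rfl fun s' _ => by ring
      rw [h2] at h1
      exact h1.trans (mul_le_mul_of_nonneg_left (hstep s a) ht0)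
    have hS := hstep s a
    have hca := hCb s a
    nlinarith [mul_le_mul_of_nonneg_left hm hθ0, mul_le_mul_of_nonneg_left hS
      (by nlinarith : (0:ℝ) ≤ (1 - θ) * t), mul_le_mul_of_nonneg_left hm (by linarith : (0:ℝ) ≤ θ)]
  intro s
  have hMle : M ≤ Cb + t * MP := by rw [hM, hs0]; exact hub s0
  rcases le_or_gt M 0 with h | h
  · exact (hxM s).trans (h.trans (le_max_right _ _))
  · have hMPM : MP = M := max_eq_left h.le
    rw [hMPM] at hMle
    have : M * (1 - t) ≤ Cb := by nlinarith
    have hMle2 : M ≤ Cb / (1 - t) := by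
      rw [le_div_iff₀ (by linarith : (0:ℝ) < 1 - t)]
      linarith
    exact (hxM s).trans (hMle2.trans (le_max_left _ _))

end Stmt8
open Stmt8 Filter in
theorem stmt_8 (N : ℕ) (hN : 0 < N) (A : Fin N → Type)
    [∀ s, Fintype (A s)] [∀ s, Nonempty (A s)]
    (c : ∀ s, A s → ℝ)
    (Phat : ∀ s, A s → Fin N → ℝ)
    (hP_nonneg : ∀ s a s', 0 ≤ Phat s a s')
    (hP_sub : ∀ s a, ∑ s', Phat s a s' ≤ 1)
    (ε : ∀ s, A s → ℝ) (hε : ∀ s a, 0 < ε s a)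
    (D : (Fin N → ℝ) → (Fin N → ℝ) → ℝ)
    (hD_nonneg : ∀ u v, 0 ≤ D u v)
    (hD_convex : ∀ (u₁ v₁ u₂ v₂ : Fin N → ℝ) (t : ℝ), 0 ≤ t → t ≤ 1 →
      D (t • u₁ + (1 - t) • u₂) (t • v₁ + (1 - t) • v₂) ≤
        t * D u₁ v₁ + (1 - t) * D u₂ v₂)
    (hD_homog : ∀ (t : ℝ), 0 ≤ t → ∀ u v, D (t • u) (t • v) = t * D u v)
    (hD_refl : ∀ u, D u u = 0)
    (hfeas : ∃ q : ∀ s, A s → ℝ, (∀ s a, 0 < q s a) ∧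
      ∀ s, ∑ a, q s a = 1 + ∑ s', ∑ a, q s' a * Phat s' a s) :
    sSup {y : ℝ | ∃ x : Fin N → ℝ,
        (∀ s, ∀ a : A s, x s ≤ c s a + ∑ s', Phat s a s' * x s' +
          sInf {v : ℝ | ∃ Ptil : Fin N → ℝ, (∀ s', 0 ≤ Ptil s') ∧ (∑ s', Ptil s') ≤ 1 ∧
            D Ptil (Phat s a) ≤ ε s a ∧ v = ∑ s', x s' * (Ptil s' - Phat s a s')}) ∧
        y = ∑ s, x s} =
    sInf {y : ℝ | ∃ (q : ∀ s, A s → ℝ) (Ptil : ∀ s, A s → Fin N → ℝ),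
        (∀ s a, 0 ≤ q s a) ∧
        (∀ s a, (∀ s', 0 ≤ Ptil s a s') ∧ (∑ s', Ptil s a s') ≤ 1 ∧
          D (Ptil s a) (Phat s a) ≤ ε s a) ∧
        (∀ s, ∑ a, q s a = 1 + ∑ s', ∑ a, q s' a * Ptil s' a s) ∧
        y = ∑ s, ∑ a, q s a * c s a} := by
  classical
  haveI : Nonempty (Fin N) := ⟨⟨0, hN⟩⟩
  haveI : Nonempty ((s : Fin N) × A s) := ⟨⟨⟨0, hN⟩, Classical.arbitrary _⟩⟩
  set PrimalSet : Set ℝ := {y : ℝ | ∃ x : Fin N → ℝ,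
        (∀ s, ∀ a : A s, x s ≤ c s a + ∑ s', Phat s a s' * x s' +
          sInf {v : ℝ | ∃ Ptil : Fin N → ℝ, (∀ s', 0 ≤ Ptil s') ∧ (∑ s', Ptil s') ≤ 1 ∧
            D Ptil (Phat s a) ≤ ε s a ∧ v = ∑ s', x s' * (Ptil s' - Phat s a s')}) ∧
        y = ∑ s, x s} with hPrimalSet
  set DualSet : Set ℝ := {y : ℝ | ∃ (q : ∀ s, A s → ℝ) (Ptil : ∀ s, A s → Fin N → ℝ),
        (∀ s a, 0 ≤ q s a) ∧
        (∀ s a, (∀ s', 0 ≤ Ptil s a s') ∧ (∑ s', Ptil s a s') ≤ 1 ∧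
          D (Ptil s a) (Phat s a) ≤ ε s a) ∧
        (∀ s, ∑ a, q s a = 1 + ∑ s', ∑ a, q s' a * Ptil s' a s) ∧
        y = ∑ s, ∑ a, q s a * c s a} with hDualSet
  -- reformulation of the superharmonicity condition
  have hPrimalIff : ∀ x : Fin N → ℝ,
      (∀ s, ∀ a : A s, x s ≤ c s a + ∑ s', Phat s a s' * x s' +
          sInf {v : ℝ | ∃ Ptil : Fin N → ℝ, (∀ s', 0 ≤ Ptil s') ∧ (∑ s', Ptil s') ≤ 1 ∧
            D Ptil (Phat s a) ≤ ε s a ∧ v = ∑ s', x s' * (Ptil s' - Phat s a s')}) ↔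
      (∀ s (a : A s), x s ≤ c s a + mfun Phat ε D x s a) := by
    intro x
    constructor
    · intro h s a
      have h2 := h s a
      rw [sInf_V_eq hP_nonneg hP_sub hε hD_refl x s a] at h2
      linarith
    · intro h s a
      rw [sInf_V_eq hP_nonneg hP_sub hε hD_refl x s a]
      have := h s a
      linarith
  -- weak duality
  have hweak : ∀ y ∈ PrimalSet, ∀ d ∈ DualSet, y ≤ d := by
    rintro y ⟨x, hx, rfl⟩ d ⟨q, Pt, hq, hPt, hfl, rfl⟩
    exact weak_duality ((hPrimalIff x).1 hx) hq (fun s a => hPt s a) hfl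
  -- the reference dual point
  obtain ⟨qhat, hqhat_pos, hqhat_flow⟩ := hfeas
  have hdhat : (∑ s, ∑ a, qhat s a * c s a) ∈ DualSet := by
    refine ⟨qhat, fun s a => Phat s a, fun s a => (hqhat_pos s a).le,
      fun s a => ⟨hP_nonneg s a, hP_sub s a, ?_⟩, hqhat_flow, rfl⟩
    rw [hD_refl]; exact (hε s a).le
  -- the shrinking factor t
  set Cd : ℝ := Finset.univ.sup' Finset.univ_nonempty
    (fun p : (s : Fin N) × A s => D 0 (Phat p.1 p.2)) with hCddef
  set εm : ℝ := Finset.univ.inf' Finset.univ_nonempty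
    (fun p : (s : Fin N) × A s => ε p.1 p.2) with hεmdef
  have hCd0 : 0 ≤ Cd := by
    obtain ⟨p⟩ := (inferInstance : Nonempty ((s : Fin N) × A s))
    exact (hD_nonneg 0 (Phat p.1 p.2)).trans
      (Finset.le_sup' (fun p : (s : Fin N) × A s => D 0 (Phat p.1 p.2)) (Finset.mem_univ p))
  have hεm : 0 < εm := by
    rw [hεmdef]
    exact (Finset.lt_inf'_iff _).2 fun p _ => hε p.1 p.2
  have hden : (0:ℝ) < Cd + εm := by linarith
  set t : ℝ := 1 - εm / (Cd + εm) with htdef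
  have hfrac0 : 0 < εm / (Cd + εm) := div_pos hεm hden
  have hfrac1 : εm / (Cd + εm) ≤ 1 := by
    rw [div_le_one hden]; linarith
  have ht0 : 0 ≤ t := by rw [htdef]; linarith
  have ht1 : t < 1 := by rw [htdef]; linarith
  have htK : ∀ s (a : A s), (fun s' => t * Phat s a s') ∈ Kset Phat ε D s a := by
    intro s a
    refine smul_Phat_mem hP_nonneg hP_sub hD_convex hD_refl ht0 ht1.le ?_
    have hDle : D 0 (Phat s a) ≤ Cd :=
      Finset.le_sup' (fun p : (s : Fin N) × A s => D 0 (Phat p.1 p.2)) (Finset.mem_univ ⟨s, a⟩)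
    have hεle : εm ≤ ε s a :=
      Finset.inf'_le (fun p : (s : Fin N) × A s => ε p.1 p.2) (Finset.mem_univ ⟨s, a⟩)
    have h1t : 1 - t = εm / (Cd + εm) := by rw [htdef]; ring
    rw [h1t]
    calc εm / (Cd + εm) * D 0 (Phat s a) ≤ εm / (Cd + εm) * (Cd + εm) :=
          mul_le_mul_of_nonneg_left (by linarith) hfrac0.le
      _ = εm := div_mul_cancel₀ εm hden.ne'
      _ ≤ ε s a := hεle
  -- uniform upper bound for the fixed points
  set Cb : ℝ := Finset.univ.sup' Finset.univ_nonempty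
    (fun p : (s : Fin N) × A s => c p.1 p.2) with hCbdef
  have hCb : ∀ s (a : A s), c s a ≤ Cb := fun s a =>
    Finset.le_sup' (fun p : (s : Fin N) × A s => c p.1 p.2) (Finset.mem_univ ⟨s, a⟩)
  set B : ℝ := max (Cb / (1 - t)) 0 with hBdef
  have hB0 : 0 ≤ B := le_max_right _ _
  -- discount sequence and fixed points
  set θf : ℕ → ℝ := fun k => 1 - 1 / ((k : ℝ) + 1) with hθf
  have hθ0 : ∀ k, 0 ≤ θf k := by
    intro k
    rw [hθf]
    simp only
    have h1 : (0:ℝ) < (k:ℝ) + 1 := by positivity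
    have : 1 / ((k:ℝ) + 1) ≤ 1 := by
      rw [div_le_one h1]
      simp
    linarith
  have hθ1 : ∀ k, θf k < 1 := by
    intro k
    rw [hθf]
    simp only
    have h1 : (0:ℝ) < 1 / ((k:ℝ) + 1) := by positivity
    linarith
  have hcontr : ∀ k, ContractingWith (θf k + (1 - θf k) * t).toNNReal
      (TT c Phat ε D t (θf k)) := fun k =>
    TT_contracting hP_nonneg hP_sub hε hD_refl ht0 ht1 (hθ0 k) (hθ1 k)
  set xk : ℕ → Fin N → ℝ := fun k => ContractingWith.fixedPoint _ (hcontr k) with hxkdef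
  have hxk : ∀ k, TT c Phat ε D t (θf k) (xk k) = xk k := fun k =>
    (hcontr k).fixedPoint_isFixedPt
  have hupper : ∀ k s, xk k s ≤ B := fun k s =>
    fixed_upper hP_nonneg hP_sub ht0 ht1 (hθ0 k) (hθ1 k).le htK (hxk k) hCb s
  -- approximate dual values
  have hdk : ∀ k, ∃ d ∈ DualSet, d ≤ (∑ s, xk k s) + 1 / ((k : ℝ) + 1) := by
    intro k
    have hpos : (0:ℝ) < 1 / ((k:ℝ) + 1) := by positivity
    obtain ⟨q, Pt, h1, h2, h3, h4⟩ := dual_approx hN hP_nonneg hP_sub hε hD_refl hD_convex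
      ht0 ht1 (hθ0 k) (hθ1 k) htK (hxk k) hpos
    exact ⟨_, ⟨q, Pt, h1, fun s a => h2 s a, h3, rfl⟩, h4⟩
  by_cases hBdd : BddBelow DualSet
  · -- main case
    obtain ⟨L, hL⟩ := hBdd
    have hBdd' : BddBelow DualSet := ⟨L, hL⟩
    have hsum_lb : ∀ k, L - 1 ≤ ∑ s, xk k s := by
      intro k
      obtain ⟨d, hdmem, hdle⟩ := hdk k
      have h1 := hL hdmem
      have h2 : 1 / ((k:ℝ) + 1) ≤ 1 := by
        rw [div_le_one (by positivity)]
        simp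
      linarith
    have hlb : ∀ k s, L - 1 - (N:ℝ) * B ≤ xk k s := by
      intro k s
      have h2 : ∑ s' ∈ Finset.univ.erase s, xk k s' ≤ (N:ℝ) * B := by
        calc ∑ s' ∈ Finset.univ.erase s, xk k s' ≤ ∑ _s' ∈ Finset.univ.erase s, B :=
              Finset.sum_le_sum fun s' _ => hupper k s'
          _ = ((Finset.univ.erase s).card : ℝ) * B := by
              rw [Finset.sum_const, nsmul_eq_mul]
          _ ≤ (N:ℝ) * B := by
              refine mul_le_mul_of_nonneg_right ?_ hB0
              have := Finset.card_erase_le (a := s) (s := (Finset.univ : Finset (Fin N)))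
              have hcard : (Finset.univ : Finset (Fin N)).card = N := by simp
              exact_mod_cast this.trans hcard.le
      have h3 : xk k s + ∑ s' ∈ Finset.univ.erase s, xk k s' = ∑ s', xk k s' :=
        Finset.add_sum_erase Finset.univ (xk k) (Finset.mem_univ s)
      have := hsum_lb k
      linarith
    -- extract a convergent subsequence
    have hcpt : IsCompact (Set.Icc (fun _ : Fin N => L - 1 - (N:ℝ) * B) (fun _ : Fin N => B)) :=
      isCompact_Icc
    have hmem : ∀ k, xk k ∈ Set.Icc (fun _ : Fin N => L - 1 - (N:ℝ) * B) (fun _ : Fin N => B) := by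
      intro k
      constructor
      · intro s; exact hlb k s
      · intro s; exact hupper k s
    obtain ⟨xi, _, φ, hφ, htend⟩ := hcpt.tendsto_subseq hmem
    have hφtop : Tendsto φ atTop atTop := hφ.tendsto_atTop
    have hxcoord : ∀ s, Tendsto (fun j => xk (φ j) s) atTop (nhds (xi s)) := fun s =>
      tendsto_pi_nhds.1 htend s
    have hsumtend : Tendsto (fun j => ∑ s, xk (φ j) s) atTop (nhds (∑ s, xi s)) :=
      tendsto_finset_sum _ fun s _ => hxcoord s
    have hdisttend : Tendsto (fun j => dist (xk (φ j)) xi) atTop (nhds 0) :=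
      tendsto_iff_dist_tendsto_zero.1 htend
    have hmtend : ∀ s (a : A s), Tendsto (fun j => mfun Phat ε D (xk (φ j)) s a) atTop
        (nhds (mfun Phat ε D xi s a)) := by
      intro s a
      rw [tendsto_iff_dist_tendsto_zero]
      refine squeeze_zero (fun j => dist_nonneg) (fun j => ?_) hdisttend
      rw [Real.dist_eq, dist_eq_norm]
      exact mfun_lipschitz hP_nonneg hP_sub hε hD_refl (xk (φ j)) xi s a
    have hPsumtend : ∀ s (a : A s), Tendsto (fun j => ∑ s', Phat s a s' * xk (φ j) s') atTop
        (nhds (∑ s', Phat s a s' * xi s')) := fun s a =>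
      tendsto_finset_sum _ fun s' _ => (hxcoord s').const_mul _
    have hθtend : Tendsto (fun j => θf (φ j)) atTop (nhds 1) := by
      have h0 : Tendsto (fun k : ℕ => θf k) atTop (nhds 1) := by
        have h : Tendsto (fun _ : ℕ => (1:ℝ)) atTop (nhds 1) := tendsto_const_nhds
        have h2 := h.sub tendsto_one_div_add_atTop_nhds_zero_nat
        simpa [hθf] using h2
      exact h0.comp hφtop
    have hsuper : ∀ s (a : A s), xi s ≤ c s a + mfun Phat ε D xi s a := by
      intro s a
      have hRHS : Tendsto (fun j => c s a + θf (φ j) * mfun Phat ε D (xk (φ j)) s a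
          + (1 - θf (φ j)) * t * ∑ s', Phat s a s' * xk (φ j) s') atTop
          (nhds (c s a + 1 * mfun Phat ε D xi s a
            + (1 - 1) * t * ∑ s', Phat s a s' * xi s')) := by
        exact (tendsto_const_nhds.add (hθtend.mul (hmtend s a))).add
          (((tendsto_const_nhds.sub hθtend).mul tendsto_const_nhds).mul (hPsumtend s a))
      have hsimp : c s a + 1 * mfun Phat ε D xi s a + (1 - 1) * t * ∑ s', Phat s a s' * xi s'
          = c s a + mfun Phat ε D xi s a := by ring
      rw [hsimp] at hRHS
      refine le_of_tendsto_of_tendsto' (hxcoord s) hRHS fun j => ?_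
      conv_lhs => rw [← hxk (φ j)]
      exact Finset.inf'_le _ (Finset.mem_univ a)
    have hxiP : (∑ s, xi s) ∈ PrimalSet := ⟨xi, (hPrimalIff xi).2 hsuper, rfl⟩
    have hsinf : sInf DualSet ≤ ∑ s, xi s := by
      have h1 : ∀ j, sInf DualSet ≤ (∑ s, xk (φ j) s) + 1 / ((φ j : ℝ) + 1) := by
        intro j
        obtain ⟨d, hdmem, hdle⟩ := hdk (φ j)
        exact (csInf_le hBdd' hdmem).trans hdle
      have h2 : Tendsto (fun j => (∑ s, xk (φ j) s) + 1 / ((φ j : ℝ) + 1)) atTop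
          (nhds ((∑ s, xi s) + 0)) :=
        hsumtend.add (tendsto_one_div_add_atTop_nhds_zero_nat.comp hφtop)
      have h3 := ge_of_tendsto' h2 h1
      simpa using h3
    have hAbove : BddAbove PrimalSet :=
      ⟨∑ s, ∑ a, qhat s a * c s a, fun y hy => hweak y hy _ hdhat⟩
    apply le_antisymm
    · refine csSup_le ⟨∑ s, xi s, hxiP⟩ fun y hy => ?_
      exact le_csInf ⟨_, hdhat⟩ fun d hd => hweak y hy d hd
    · exact hsinf.trans (le_csSup hAbove hxiP)
  · -- dual unbounded below: both sides are the junk value 0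
    have hempty : PrimalSet = ∅ := by
      rw [Set.eq_empty_iff_forall_notMem]
      intro y hy
      exact hBdd ⟨y, fun d hd => hweak y hy d hd⟩
    rw [hempty, Real.sSup_empty, Real.sInf_of_not_bddBelow hBdd]
end

section
/- Consider a stochastic shortest path model with finite state space Fin N (N ≥ 1), a nonempty finite action set A s for each state s, nonnegative costs c : (s : Fin N) → A s → ℝ, and estimated substochastic transitions P̂ : (s : Fin N) → A s → Fin N → ℝ (P̂ s a s' ≥ 0 and ∑_{s'} P̂ s a s' ≤ 1). Suppose every stationary policy is proper with respect to P̂, and let J* : Fin N → ℝ be a fixed point of the Bellman operator U built from P̂, i.e., J* s = min_{a ∈ A s} (c s a + ∑_{s'} P̂ s a s' · J* s'). For each (s,a) let 𝒫(s,a) be a set of substochastic vectors (each P̃ ∈ 𝒫(s,a) satisfies P̃ ≥ 0 and ∑_{s'} P̃ s' ≤ 1) that contains P̂ s a. If Ĵ : Fin N → ℝ satisfies Ĵ s = min_{a ∈ A s} (c s a + inf_{P̃ ∈ 𝒫(s,a)} ∑_{s'} P̃ s' · Ĵ s') for every s, then Ĵ ≤ J* componentwise. -/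
theorem stmt_9 (N : ℕ) (hN : 0 < N) (A : Fin N → Type)
    [∀ s, Fintype (A s)] [∀ s, Nonempty (A s)]
    (c : ∀ s, A s → ℝ) (hc : ∀ s a, 0 ≤ c s a)
    (Phat : ∀ s, A s → Fin N → ℝ)
    (hP_nonneg : ∀ s a s', 0 ≤ Phat s a s')
    (hP_sub : ∀ s a, ∑ s', Phat s a s' ≤ 1)
    (hproper : ∀ π : ∀ s, A s, ∀ s,
      ∑ s', ((Matrix.of fun s₁ s₂ => Phat s₁ (π s₁) s₂) ^ N) s s' < 1)
    (J : Fin N → ℝ)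
    (hJ : ∀ s, J s = ⨅ a, c s a + ∑ s', Phat s a s' * J s')
    (Pconf : ∀ s, A s → Set (Fin N → ℝ))
    (hPconf_sub : ∀ s a, ∀ Ptil ∈ Pconf s a, (∀ s', 0 ≤ Ptil s') ∧ ∑ s', Ptil s' ≤ 1)
    (hPconf_mem : ∀ s a, Phat s a ∈ Pconf s a)
    (Jhat : Fin N → ℝ)
    (hJhat : ∀ s, Jhat s = ⨅ a,
      (c s a + sInf ((fun Ptil : Fin N → ℝ => ∑ s', Ptil s' * Jhat s') '' Pconf s a))) :
    ∀ s, Jhat s ≤ J s := by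
  -- Step 1: Jhat s ≤ c s a + ∑ Phat s a s' * Jhat s' for all a
  have key : ∀ s a, Jhat s ≤ c s a + ∑ s', Phat s a s' * Jhat s' := by
    intro s a
    have hbdd : BddBelow (Set.range fun a : A s =>
        c s a + sInf ((fun Ptil : Fin N → ℝ => ∑ s', Ptil s' * Jhat s') '' Pconf s a)) :=
      (Set.finite_range _).bddBelow
    have h1 : Jhat s ≤ c s a +
        sInf ((fun Ptil : Fin N → ℝ => ∑ s', Ptil s' * Jhat s') '' Pconf s a) := by
      rw [hJhat s]; exact ciInf_le hbdd a
    have hinf : sInf ((fun Ptil : Fin N → ℝ => ∑ s', Ptil s' * Jhat s') '' Pconf s a)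
        ≤ ∑ s', Phat s a s' * Jhat s' := by
      apply csInf_le
      · refine ⟨-∑ s', |Jhat s'|, ?_⟩
        rintro x ⟨Ptil, hPt, rfl⟩
        obtain ⟨hnn, hsum⟩ := hPconf_sub s a Ptil hPt
        have : ∀ s' ∈ Finset.univ, -|Jhat s'| ≤ Ptil s' * Jhat s' := by
          intro s' _
          have h1 : Ptil s' ≤ 1 := by
            calc Ptil s' ≤ ∑ t, Ptil t :=
              Finset.single_le_sum (fun t _ => hnn t) (Finset.mem_univ s')
            _ ≤ 1 := hsum
          have := abs_nonneg (Jhat s')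
          calc -|Jhat s'| ≤ -(Ptil s' * |Jhat s'|) := by nlinarith [hnn s']
          _ ≤ Ptil s' * Jhat s' := by
            rw [neg_le]
            calc -(Ptil s' * Jhat s') = Ptil s' * (-Jhat s') := by ring
            _ ≤ Ptil s' * |Jhat s'| := by
              apply mul_le_mul_of_nonneg_left (neg_le_abs _) (hnn s')
        calc -∑ s', |Jhat s'| = ∑ s', -|Jhat s'| := by rw [Finset.sum_neg_distrib]
        _ ≤ ∑ s', Ptil s' * Jhat s' := Finset.sum_le_sum this
      · exact ⟨Phat s a, hPconf_mem s a, rfl⟩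
    linarith
  -- Step 2: choose minimizing policy for J
  have hπ : ∀ s, ∃ a : A s, J s = c s a + ∑ s', Phat s a s' * J s' := by
    intro s
    obtain ⟨a, ha⟩ := Finite.exists_min (fun a : A s => c s a + ∑ s', Phat s a s' * J s')
    refine ⟨a, ?_⟩
    rw [hJ s]
    exact le_antisymm (ciInf_le (Set.finite_range _).bddBelow a) (le_ciInf ha)
  choose π hπ using hπ
  set Q : Matrix (Fin N) (Fin N) ℝ := Matrix.of fun s₁ s₂ => Phat s₁ (π s₁) s₂ with hQ
  set d : Fin N → ℝ := fun s => Jhat s - J s with hd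
  have hQnn : ∀ k s s', 0 ≤ (Q ^ k) s s' := by
    intro k
    induction k with
    | zero => intro s s'; simp [Matrix.one_apply]; positivity
    | succ k ih =>
      intro s s'
      rw [pow_succ, Matrix.mul_apply]
      exact Finset.sum_nonneg fun t _ => mul_nonneg (ih s t) (hP_nonneg t (π t) s')
  have hstep : ∀ s, d s ≤ ∑ s', Q s s' * d s' := by
    intro s
    have h1 := key s (π s)
    have h2 := hπ s
    simp only [hd, hQ, Matrix.of_apply]
    have : ∑ s', Phat s (π s) s' * (Jhat s' - J s') =
        (∑ s', Phat s (π s) s' * Jhat s') - ∑ s', Phat s (π s) s' * J s' := by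
      rw [← Finset.sum_sub_distrib]; congr 1; ext s'; ring
    rw [this]; linarith
  have hiter : ∀ k s, d s ≤ ∑ s', (Q ^ k) s s' * d s' := by
    intro k
    induction k with
    | zero => intro s; simp [Matrix.one_apply]
    | succ k ih =>
      intro s
      calc d s ≤ ∑ s', Q s s' * d s' := hstep s
      _ ≤ ∑ s', Q s s' * (∑ s'', (Q ^ k) s' s'' * d s'') := by
          apply Finset.sum_le_sum
          intro s' _
          exact mul_le_mul_of_nonneg_left (ih s') (hP_nonneg s (π s) s')
      _ = ∑ s'', ((Q ^ (k + 1)) s s'') * d s'' := by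
          rw [pow_succ']
          simp only [Matrix.mul_apply, Finset.sum_mul, Finset.mul_sum]
          rw [Finset.sum_comm]
          congr 1; ext s'; congr 1; ext s''; ring
  -- Step 3: conclude d ≤ 0
  intro s
  by_contra h
  push_neg at h
  obtain ⟨s₀, _, hs₀⟩ := Finset.exists_max_image Finset.univ d ⟨s, Finset.mem_univ s⟩
  have hpos : 0 < d s₀ := lt_of_lt_of_le (by simpa [hd] using h) (hs₀ s (Finset.mem_univ s))
  have h1 := hiter N s₀
  have h2 : ∑ s', (Q ^ N) s₀ s' * d s' ≤ (∑ s', (Q ^ N) s₀ s') * d s₀ := by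
    rw [Finset.sum_mul]
    exact Finset.sum_le_sum fun s' _ =>
      mul_le_mul_of_nonneg_left (hs₀ s' (Finset.mem_univ s')) (hQnn N s₀ s')
  have h3 : ∑ s', (Q ^ N) s₀ s' < 1 := hproper π s₀
  nlinarith
end

section
/- Let n ≥ 1, let P̂ : Fin n → ℝ satisfy P̂ i ≥ 0 for all i and ∑_i P̂ i ≤ 1, let ε ≥ 0 be a real number, and let x : Fin n → ℝ satisfy x i ≥ 0 for all i. Then the infimum of ∑_i x i · (P̃ i − P̂ i) over all P̃ : Fin n → ℝ with P̃ i ≥ 0 for all i, ∑_i P̃ i ≤ 1, and max_i |P̃ i − P̂ i| ≤ ε, equals −∑_i min(ε, P̂ i) · x i, and this infimum is attained at the vector P̃ defined by P̃ i = max(P̂ i − ε, 0). -/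
theorem stmt_12 (n : ℕ) (hn : 0 < n) (Phat : Fin n → ℝ)
    (hP_nonneg : ∀ i, 0 ≤ Phat i) (hP_sum : ∑ i, Phat i ≤ 1)
    (ε : ℝ) (hε : 0 ≤ ε) (x : Fin n → ℝ) (hx : ∀ i, 0 ≤ x i) :
    IsLeast {v : ℝ | ∃ Ptil : Fin n → ℝ, (∀ i, 0 ≤ Ptil i) ∧ (∑ i, Ptil i) ≤ 1 ∧
        (∀ i, |Ptil i - Phat i| ≤ ε) ∧ v = ∑ i, x i * (Ptil i - Phat i)}
      (-∑ i, min ε (Phat i) * x i) ∧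
    (∀ i, 0 ≤ max (Phat i - ε) 0) ∧
    (∑ i, max (Phat i - ε) 0) ≤ 1 ∧
    (∀ i, |max (Phat i - ε) 0 - Phat i| ≤ ε) ∧
    ∑ i, x i * (max (Phat i - ε) 0 - Phat i) = -∑ i, min ε (Phat i) * x i := by
  have key : ∀ i, max (Phat i - ε) 0 - Phat i = -min ε (Phat i) := by
    intro i
    rcases le_total (Phat i) ε with h | h
    · rw [max_eq_right (by linarith), min_eq_right h]; ring
    · rw [max_eq_left (by linarith), min_eq_left h]; ring
  have h1 : ∀ i, 0 ≤ max (Phat i - ε) 0 := fun i => le_max_right _ _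
  have h2 : (∑ i, max (Phat i - ε) 0) ≤ 1 := by
    calc ∑ i, max (Phat i - ε) 0 ≤ ∑ i, Phat i := by
          apply Finset.sum_le_sum; intro i _
          rcases le_total (Phat i) ε with h | h
          · rw [max_eq_right (by linarith)]; exact hP_nonneg i
          · rw [max_eq_left (by linarith)]; linarith
      _ ≤ 1 := hP_sum
  have h3 : ∀ i, |max (Phat i - ε) 0 - Phat i| ≤ ε := by
    intro i
    rw [key i, abs_neg, abs_of_nonneg (le_min hε (hP_nonneg i))]
    exact min_le_left _ _
  have h4 : ∑ i, x i * (max (Phat i - ε) 0 - Phat i) = -∑ i, min ε (Phat i) * x i := by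
    rw [← Finset.sum_neg_distrib]
    apply Finset.sum_congr rfl
    intro i _
    rw [key i]; ring
  refine ⟨⟨⟨_, h1, h2, h3, h4.symm⟩, ?_⟩, h1, h2, h3, h4⟩
  rintro v ⟨P, hPn, hPs, hPe, rfl⟩
  have hterm : ∀ i, -(min ε (Phat i) * x i) ≤ x i * (P i - Phat i) := by
    intro i
    have habs := abs_le.mp (hPe i)
    have hmin : -min ε (Phat i) ≤ P i - Phat i := by
      rcases le_total ε (Phat i) with h | h
      · rw [min_eq_left h]; linarith [habs.1]
      · rw [min_eq_right h]; linarith [hPn i]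
    nlinarith [hx i]
  calc -∑ i, min ε (Phat i) * x i = ∑ i, -(min ε (Phat i) * x i) := by
        rw [Finset.sum_neg_distrib]
    _ ≤ ∑ i, x i * (P i - Phat i) := Finset.sum_le_sum fun i _ => hterm i
end

section
/- Let n ≥ 1 and let p, q : Fin n → ℝ be probability vectors (p i ≥ 0, q i ≥ 0, ∑_i p i = 1, ∑_i q i = 1) such that q i = 0 whenever p i = 0. Let ε ≥ 0 and suppose the Kullback–Leibler divergence with logarithm base 2 satisfies ∑_i q i · logb 2 (q i / p i) ≤ ε (with the convention that terms with q i = 0 contribute 0). Then for every x : Fin n → ℝ, ∑_i x i · (q i − p i) ≥ −2 · (max_i |x i|) · √((Real.log 2 / 2) · ε). -/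
/-!
By Hölder, `|∑ xᵢ (qᵢ - pᵢ)| ≤ (max |xᵢ|) ‖q - p‖₁`, and Pinsker's inequality
`‖q - p‖₁² ≤ 2 KL(q ‖ p)` (in nats) turns the bound `KL ≤ ε` in bits into
`‖q - p‖₁ ≤ √(2 ε log 2)`. Pinsker follows from Cauchy–Schwarz with weights `(qᵢ + 2 pᵢ) / 3`
and the scalar inequality `3 (t - 1)² ≤ 2 (t + 2) (t log t - t + 1)` for `t ≥ 0`: the
derivative of the difference is `4 ((t + 1) log t - 2 (t - 1))`, an increasing function
vanishing at `t = 1`.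
-/

open Real Finset InformationTheory

lemma hasDerivAt_add_one_mul_log_sub {x : ℝ} (hx : 0 < x) :
    HasDerivAt (fun t ↦ (t + 1) * log t - 2 * (t - 1)) (log x + x⁻¹ - 1) x := by
  refine ((((hasDerivAt_id x).add_const 1).mul (hasDerivAt_log hx.ne')).sub
    (((hasDerivAt_id x).sub_const 1).const_mul 2)).congr_deriv ?_
  simp only [id_eq]
  field_simp
  ring

lemma monotoneOn_add_one_mul_log_sub :
    MonotoneOn (fun t ↦ (t + 1) * log t - 2 * (t - 1)) (Set.Ioi 0) := by
  refine monotoneOn_of_hasDerivWithinAt_nonneg (convex_Ioi 0)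
    (fun x hx ↦ (hasDerivAt_add_one_mul_log_sub hx).continuousAt.continuousWithinAt)
    (fun x hx ↦ (hasDerivAt_add_one_mul_log_sub (interior_subset hx)).hasDerivWithinAt)
    fun x hx ↦ ?_
  have := one_sub_inv_le_log_of_pos (interior_subset hx : (0 : ℝ) < x)
  linarith

lemma hasDerivAt_two_mul_add_two_mul_klFun_sub {x : ℝ} (hx : x ≠ 0) :
    HasDerivAt (fun t ↦ 2 * (t + 2) * klFun t - 3 * (t - 1) ^ 2)
      (4 * ((x + 1) * log x - 2 * (x - 1))) x := by
  refine ((((hasDerivAt_id x).add_const 2).const_mul 2).mul (hasDerivAt_klFun hx)).sub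
    ((((hasDerivAt_id x).sub_const 1).pow 2).const_mul 3) |>.congr_deriv ?_
  simp only [id_eq, klFun_apply]
  ring

theorem three_mul_sq_sub_one_le_klFun {t : ℝ} (ht : 0 ≤ t) :
    3 * (t - 1) ^ 2 ≤ 2 * (t + 2) * klFun t := by
  set G : ℝ → ℝ := fun t ↦ 2 * (t + 2) * klFun t - 3 * (t - 1) ^ 2
  have hG : ∀ x ≠ 0, deriv G x = 4 * ((x + 1) * log x - 2 * (x - 1)) :=
    fun x hx ↦ (hasDerivAt_two_mul_add_two_mul_klFun_sub hx).deriv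
  have hdiff : ∀ s : Set ℝ, 0 ∉ s → DifferentiableOn ℝ G s :=
    fun s hs x hx ↦ (hasDerivAt_two_mul_add_two_mul_klFun_sub
      (ne_of_mem_of_not_mem hx hs)).differentiableAt.differentiableWithinAt
  have hcont : Continuous G := by fun_prop (disch := exact continuous_klFun)
  have hmono := monotoneOn_add_one_mul_log_sub
  have hmin : IsMinOn G (Set.Ici 0) 1 := by
    refine isMinOn_Ici_of_deriv hcont.continuousAt hcont.continuousAt
      (hdiff _ (by simp)) (hdiff _ (by simp)) (fun x hx ↦ ?_) (fun x hx ↦ ?_)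
    · have := hmono hx.1 (Set.mem_Ioi.2 one_pos) hx.2.le
      rw [hG x hx.1.ne']
      norm_num at this
      linarith
    · have := hmono (Set.mem_Ioi.2 one_pos) (Set.mem_Ioi.2 (one_pos.trans hx)) (le_of_lt hx)
      rw [hG x (one_pos.trans hx).ne']
      norm_num at this
      linarith
  have : G 1 ≤ G t := hmin (Set.mem_Ici.2 ht)
  simp only [G, klFun_one] at this
  linarith

lemma mul_log_div_sub_add_eq_mul_klFun {p q : ℝ} (hp : 0 ≤ p) (hpq : p = 0 → q = 0) :
    q * log (q / p) - q + p = p * klFun (q / p) := by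
  rcases hp.eq_or_lt with rfl | hp
  · simp [hpq rfl]
  · rw [klFun_apply]
    field_simp
    ring

lemma three_mul_sq_sub_le_mul_klFun {p q : ℝ} (hp : 0 ≤ p) (hq : 0 ≤ q) (hpq : p = 0 → q = 0) :
    3 * (q - p) ^ 2 ≤ 2 * (q + 2 * p) * (p * klFun (q / p)) := by
  rcases hp.eq_or_lt with rfl | hp
  · simp [hpq rfl]
  · have key := mul_le_mul_of_nonneg_left (three_mul_sq_sub_one_le_klFun (div_nonneg hq hp.le))
      (sq_nonneg p)
    have hq : q = q / p * p := by field_simp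
    calc 3 * (q - p) ^ 2 = p ^ 2 * (3 * (q / p - 1) ^ 2) := by rw [hq]; field_simp
      _ ≤ p ^ 2 * (2 * (q / p + 2) * klFun (q / p)) := key
      _ = 2 * (q + 2 * p) * (p * klFun (q / p)) := by field_simp

/-- **Pinsker's inequality**, with the divergence in nats. -/
theorem sq_sum_abs_sub_le_two_mul_sum_mul_log {ι : Type*} [Fintype ι] {p q : ι → ℝ}
    (hp : ∀ i, 0 ≤ p i) (hq : ∀ i, 0 ≤ q i) (hps : ∑ i, p i = 1) (hqs : ∑ i, q i = 1)
    (habs : ∀ i, p i = 0 → q i = 0) :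
    (∑ i, |q i - p i|) ^ 2 ≤ 2 * ∑ i, q i * log (q i / p i) := by
  have hKL : ∑ i, q i * log (q i / p i) = ∑ i, p i * klFun (q i / p i) := by
    simp_rw [← mul_log_div_sub_add_eq_mul_klFun (hp _) (habs _), sum_add_distrib, sum_sub_distrib,
      hps, hqs, sub_add_cancel]
  calc (∑ i, |q i - p i|) ^ 2
      ≤ (∑ i, (q i + 2 * p i) / 3) * ∑ i, 2 * (p i * klFun (q i / p i)) := by
        refine sum_sq_le_sum_mul_sum_of_sq_le_mul _ (fun i _ ↦ by linarith [hp i, hq i])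
          (fun i _ ↦ mul_nonneg zero_le_two
            (mul_nonneg (hp i) (klFun_nonneg (div_nonneg (hq i) (hp i)))))
          fun i _ ↦ ?_
        have := three_mul_sq_sub_le_mul_klFun (hp i) (hq i) (habs i)
        rw [sq_abs]
        linarith
    _ = 2 * ∑ i, q i * log (q i / p i) := by
        rw [← sum_div, sum_add_distrib, ← mul_sum, ← mul_sum, hps, hqs, hKL]
        norm_num

lemma abs_sum_mul_le_iSup_abs_mul_sum_abs {ι : Type*} [Fintype ι] (x y : ι → ℝ) :
    |∑ i, x i * y i| ≤ (⨆ i, |x i|) * ∑ i, |y i| := by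
  have hx : ∀ i, |x i| ≤ ⨆ i, |x i| := le_ciSup (Set.finite_range _).bddAbove
  calc |∑ i, x i * y i| ≤ ∑ i, |x i| * |y i| := by
        simpa only [abs_mul] using abs_sum_le_sum_abs (fun i ↦ x i * y i) univ
    _ ≤ ∑ i, (⨆ i, |x i|) * |y i| := by gcongr with i; exact hx i
    _ = (⨆ i, |x i|) * ∑ i, |y i| := (mul_sum _ _ _).symm

theorem stmt_13_general (n : ℕ) (p q : Fin n → ℝ)
    (hp : ∀ i, 0 ≤ p i) (hq : ∀ i, 0 ≤ q i)
    (hps : ∑ i, p i = 1) (hqs : ∑ i, q i = 1)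
    (habs : ∀ i, p i = 0 → q i = 0)
    (ε : ℝ)
    (hKL : ∑ i, q i * Real.logb 2 (q i / p i) ≤ ε)
    (x : Fin n → ℝ) :
    -(2 * (⨆ i, |x i|) * Real.sqrt ((Real.log 2 / 2) * ε)) ≤ ∑ i, x i * (q i - p i) := by
  have hKL_nats : ∑ i, q i * log (q i / p i) ≤ log 2 * ε := by
    have hlog2 : 0 < log 2 := log_pos one_lt_two
    simp_rw [logb, mul_div_assoc', ← sum_div, div_le_iff₀ hlog2] at hKL
    linarith
  have hTV : ∑ i, |q i - p i| ≤ 2 * √(log 2 / 2 * ε) := by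
    rw [show 2 * √(log 2 / 2 * ε) = √(2 * (log 2 * ε)) by
      rw [← sqrt_sq zero_le_two, ← sqrt_mul (sq_nonneg 2)]; ring_nf]
    exact le_sqrt_of_sq_le ((sq_sum_abs_sub_le_two_mul_sum_mul_log hp hq hps hqs habs).trans
      (by linarith))
  have hM : 0 ≤ ⨆ i, |x i| := iSup_nonneg fun i ↦ abs_nonneg (x i)
  calc -(2 * (⨆ i, |x i|) * √(log 2 / 2 * ε)) ≤ -((⨆ i, |x i|) * ∑ i, |q i - p i|) := by
        rw [mul_comm 2, mul_assoc]
        exact neg_le_neg (mul_le_mul_of_nonneg_left hTV hM)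
    _ ≤ ∑ i, x i * (q i - p i) := neg_le_of_abs_le (abs_sum_mul_le_iSup_abs_mul_sum_abs _ _)

theorem stmt_13 (n : ℕ) (hn : 0 < n) (p q : Fin n → ℝ)
    (hp : ∀ i, 0 ≤ p i) (hq : ∀ i, 0 ≤ q i)
    (hps : ∑ i, p i = 1) (hqs : ∑ i, q i = 1)
    (habs : ∀ i, p i = 0 → q i = 0)
    (ε : ℝ) (hε : 0 ≤ ε)
    (hKL : ∑ i, q i * Real.logb 2 (q i / p i) ≤ ε)
    (x : Fin n → ℝ) :
    -(2 * (⨆ i, |x i|) * Real.sqrt ((Real.log 2 / 2) * ε)) ≤ ∑ i, x i * (q i - p i) :=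
  stmt_13_general n p q hp hq hps hqs habs ε hKL x
end

section
/- Let n ≥ 1 and let p, q : Fin n → ℝ be probability vectors (p i ≥ 0, q i ≥ 0, ∑_i p i = 1, ∑_i q i = 1) with p i > 0 for all i. Let x : Fin n → ℝ, set μ = ∑_i p i · x i, V = ∑_i p i · (x i − μ)², and M = max_i |x i − μ|, and assume M > 0. Let ε ≥ 0 and suppose the (natural-logarithm) Kullback–Leibler divergence satisfies ∑_i q i · Real.log (q i / p i) ≤ ε (terms with q i = 0 contributing 0). Then: if ε ≤ V / M², then ∑_i x i · (q i − p i) ≥ −2·√(V·ε); and if ε > V / M², then ∑_i x i · (q i − p i) ≥ −(V / M + M·ε). -/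
open Finset Real

/-!
For every `f`, `∑ q f ≤ KL(q‖p) + ∑ p e^f - 1`: this is the Donsker–Varadhan inequality weakened by
`log S ≤ S - 1`, and termwise it is the Fenchel–Young inequality for `u ↦ u log u`. Take
`f = -(x - μ) / λ` with `λ ≥ M`; since `e^t ≤ 1 + t + t²` for `|t| ≤ 1` and `x - μ` is centred under
`p`, `∑ p e^f ≤ 1 + V / λ²`, whence `∑ x (q - p) ≥ -(λ ε + V / λ)`. It remains to choose `λ`:
`λ = √(V / ε)` when this is at least `M`, that is when `ε ≤ V / M²` (for `ε = 0`, let `λ → ∞`),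
and `λ = M` otherwise.
-/

theorem mul_sub_mul_log_div_le_mul_exp_sub {p q : ℝ} (hp : 0 < p) (hq : 0 ≤ q) (t : ℝ) :
    q * t - q * log (q / p) ≤ p * exp t - q := by
  rcases hq.eq_or_lt with rfl | hq
  · simpa using (mul_pos hp (exp_pos t)).le
  have hexp : exp (t - log (q / p)) = p * exp t / q := by
    rw [exp_sub, exp_log (div_pos hq hp)]
    field_simp
  have := mul_le_mul_of_nonneg_left (add_one_le_exp (t - log (q / p))) hq.le
  rw [hexp, mul_div_cancel₀ _ hq.ne'] at this
  linarith

section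
variable {ι : Type*} [Fintype ι]

theorem sum_mul_sub_sum_mul_log_div_le (p q f : ι → ℝ) (hp : ∀ i, 0 < p i) (hq : ∀ i, 0 ≤ q i) :
    ∑ i, q i * f i - ∑ i, q i * log (q i / p i) ≤ ∑ i, p i * exp (f i) - ∑ i, q i := by
  rw [← sum_sub_distrib, ← sum_sub_distrib]
  exact sum_le_sum fun i _ => mul_sub_mul_log_div_le_mul_exp_sub (hp i) (hq i) (f i)

theorem sum_mul_exp_mul_le_one_add (p z : ι → ℝ) (hp : ∀ i, 0 ≤ p i) (hps : ∑ i, p i = 1)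
    (hz : ∑ i, p i * z i = 0) {c : ℝ} (hcz : ∀ i, |c * z i| ≤ 1) :
    ∑ i, p i * exp (c * z i) ≤ 1 + c ^ 2 * ∑ i, p i * z i ^ 2 := by
  have hterm : ∀ i, p i * exp (c * z i) ≤ p i + c * (p i * z i) + c ^ 2 * (p i * z i ^ 2) := by
    intro i
    have := (abs_le.1 (abs_exp_sub_one_sub_id_le (hcz i))).2
    nlinarith [hp i]
  calc ∑ i, p i * exp (c * z i)
      ≤ ∑ i, (p i + c * (p i * z i) + c ^ 2 * (p i * z i ^ 2)) := sum_le_sum fun i _ => hterm i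
    _ = 1 + c ^ 2 * ∑ i, p i * z i ^ 2 := by
      rw [sum_add_distrib, sum_add_distrib, ← mul_sum, ← mul_sum, hps, hz]
      ring

theorem neg_mul_kl_add_div_le_sum_mul_sub (p q x : ι → ℝ) (hp : ∀ i, 0 < p i)
    (hq : ∀ i, 0 ≤ q i) (hps : ∑ i, p i = 1) (hqs : ∑ i, q i = 1) {μ : ℝ}
    (hμ : μ = ∑ i, p i * x i) {l : ℝ} (hl : 0 < l) (hxl : ∀ i, |x i - μ| ≤ l) :
    -(l * ∑ i, q i * log (q i / p i) + (∑ i, p i * (x i - μ) ^ 2) / l)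
      ≤ ∑ i, x i * (q i - p i) := by
  have hcentered : ∑ i, p i * (x i - μ) = 0 := by
    simp only [mul_sub, sum_sub_distrib, ← sum_mul, hps, hμ, one_mul, sub_self]
  have hshift : ∑ i, q i * (x i - μ) = ∑ i, x i * (q i - p i) := by
    simp only [mul_sub, sum_sub_distrib, ← sum_mul, hqs, hμ, one_mul]
    simp only [mul_comm]
  have hbd : ∀ i, |-l⁻¹ * (x i - μ)| ≤ 1 := fun i => by
    rw [abs_mul, abs_neg, abs_inv, abs_of_pos hl, inv_mul_le_one₀ hl]
    exact hxl i
  have hdv := sum_mul_sub_sum_mul_log_div_le p q (fun i => -l⁻¹ * (x i - μ)) hp hq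
  have hmgf := sum_mul_exp_mul_le_one_add p (fun i => x i - μ) (fun i => (hp i).le) hps
    hcentered hbd
  simp only [mul_left_comm (q _) (-l⁻¹), ← mul_sum, hshift, hqs] at hdv
  generalize ∑ i, x i * (q i - p i) = D at hdv ⊢
  generalize ∑ i, q i * log (q i / p i) = K at hdv ⊢
  generalize ∑ i, p i * (x i - μ) ^ 2 = V at hmgf ⊢
  have hscaled : -l⁻¹ * D - K ≤ l⁻¹ ^ 2 * V := by rw [← neg_sq]; linarith
  calc -(l * K + V / l) = l * (-l⁻¹ * D - K) + D - l * (l⁻¹ ^ 2 * V) := by field_simp; ring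
    _ ≤ l * (l⁻¹ ^ 2 * V) + D - l * (l⁻¹ ^ 2 * V) := by gcongr
    _ = D := by ring

end

theorem neg_two_sqrt_le_of_forall_le {M V ε D : ℝ} (hM : 0 < M) (hε : 0 ≤ ε) (hMV : M ^ 2 * ε ≤ V)
    (hD : ∀ l, M ≤ l → -(l * ε + V / l) ≤ D) : -(2 * √(V * ε)) ≤ D := by
  rcases hε.eq_or_lt with rfl | hε
  · have hV : 0 ≤ V := by simpa using hMV
    refine le_of_forall_pos_le_add fun δ hδ => ?_
    have hl : 0 < M + V / δ := by positivity
    have hVl : V / (M + V / δ) ≤ δ := by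
      rw [div_le_iff₀ hl, mul_add, mul_div_cancel₀ _ hδ.ne']
      linarith [mul_pos hδ hM]
    have := hD (M + V / δ) (le_add_of_nonneg_right (by positivity))
    simp only [mul_zero, sqrt_zero] at this ⊢
    linarith
  · have hV : 0 < V := (by positivity : 0 < M ^ 2 * ε).trans_le hMV
    set l := √(V / ε)
    have hl : M ≤ l := (le_sqrt hM.le (by positivity)).2 ((le_div_iff₀ hε).2 hMV)
    have hlpos : 0 < l := hM.trans_le hl
    have hl2 : l ^ 2 = V / ε := sq_sqrt (by positivity)
    have hsqrt : √(V * ε) = l * ε := by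
      rw [show V * ε = (l * ε) ^ 2 by rw [mul_pow, hl2]; field_simp, sqrt_sq (by positivity)]
    have hVl : V / l = l * ε := by
      rw [div_eq_iff hlpos.ne', show V = l ^ 2 * ε by rw [hl2]; field_simp]
      ring
    have := hD l hl
    rw [hsqrt]
    linarith

theorem stmt_14_general (n : ℕ) (p q : Fin n → ℝ)
    (hp : ∀ i, 0 < p i) (hq : ∀ i, 0 ≤ q i)
    (hps : ∑ i, p i = 1) (hqs : ∑ i, q i = 1)
    (x : Fin n → ℝ) (μ V M : ℝ)
    (hμ : μ = ∑ i, p i * x i)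
    (hV : V = ∑ i, p i * (x i - μ) ^ 2)
    (hM : M = ⨆ i, |x i - μ|)
    (hMpos : 0 < M)
    (ε : ℝ) (hε : 0 ≤ ε)
    (hKL : ∑ i, q i * Real.log (q i / p i) ≤ ε) :
    (ε ≤ V / M ^ 2 → -(2 * Real.sqrt (V * ε)) ≤ ∑ i, x i * (q i - p i)) ∧
    (V / M ^ 2 < ε → -(V / M + M * ε) ≤ ∑ i, x i * (q i - p i)) := by
  have hxM : ∀ i, |x i - μ| ≤ M := fun i =>
    hM ▸ le_ciSup (f := fun i => |x i - μ|) (Set.finite_range _).bddAbove i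
  have hbound : ∀ l, M ≤ l → -(l * ε + V / l) ≤ ∑ i, x i * (q i - p i) := fun l hl => by
    have hlpos := hMpos.trans_le hl
    have := neg_mul_kl_add_div_le_sum_mul_sub p q x hp hq hps hqs hμ hlpos
      fun i => (hxM i).trans hl
    rw [← hV] at this
    linarith [mul_le_mul_of_nonneg_left hKL hlpos.le]
  refine ⟨fun hsmall => neg_two_sqrt_le_of_forall_le hMpos hε ?_ hbound, fun _ => ?_⟩
  · rwa [le_div_iff₀ (by positivity), mul_comm] at hsmall
  · linarith [hbound M le_rfl]

theorem stmt_14 (n : ℕ) (hn : 0 < n) (p q : Fin n → ℝ)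
    (hp : ∀ i, 0 < p i) (hq : ∀ i, 0 ≤ q i)
    (hps : ∑ i, p i = 1) (hqs : ∑ i, q i = 1)
    (x : Fin n → ℝ) (μ V M : ℝ)
    (hμ : μ = ∑ i, p i * x i)
    (hV : V = ∑ i, p i * (x i - μ) ^ 2)
    (hM : M = ⨆ i, |x i - μ|)
    (hMpos : 0 < M)
    (ε : ℝ) (hε : 0 ≤ ε)
    (hKL : ∑ i, q i * Real.log (q i / p i) ≤ ε) :
    (ε ≤ V / M ^ 2 → -(2 * Real.sqrt (V * ε)) ≤ ∑ i, x i * (q i - p i)) ∧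
    (V / M ^ 2 < ε → -(V / M + M * ε) ≤ ∑ i, x i * (q i - p i)) :=
  stmt_14_general n p q hp hq hps hqs x μ V M hμ hV hM hMpos ε hε hKL
end

section
/- Let n ≥ 1, let p : Fin n → ℝ satisfy p i ≥ 0 for all i and 0 < ∑_i p i ≤ 1, let X : Fin n → ℝ, and let λ > 0 be a real number such that |X i| ≤ λ for every i with p i > 0. Then λ · Real.log (∑_i p i · Real.exp (X i / λ)) ≤ ∑_i p i · X i + (1/λ) · ∑_i p i · (X i)². -/
/-!
On the support of `p` we have `|X / λ| ≤ 1`, so `e^{X/λ} ≤ 1 + X/λ + (X/λ)²`; averaging against `p`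
and using `∑ p ≤ 1` bounds the moment generating sum `S` by `1 + E[X]/λ + E[X²]/λ²`, and
`log S ≤ S - 1` finishes the proof after multiplying by `λ`.
-/

open Finset Real

lemma Real.exp_le_one_add_add_sq {t : ℝ} (ht : |t| ≤ 1) : exp t ≤ 1 + t + t ^ 2 := by
  have := (abs_le.mp (abs_exp_sub_one_sub_id_le ht)).2
  linarith

section WeightedSums

variable {ι : Type*} {s : Finset ι} {w t : ι → ℝ}

lemma Finset.sum_mul_exp_le (hw : ∀ i ∈ s, 0 ≤ w i) (ht : ∀ i ∈ s, 0 < w i → |t i| ≤ 1) :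
    ∑ i ∈ s, w i * exp (t i) ≤ ∑ i ∈ s, w i + ∑ i ∈ s, w i * t i + ∑ i ∈ s, w i * t i ^ 2 := by
  simp only [← sum_add_distrib, ← mul_one_add, ← mul_add]
  refine sum_le_sum fun i hi => ?_
  rcases (hw i hi).eq_or_lt with hzero | hpos
  · simp [← hzero]
  · exact mul_le_mul_of_nonneg_left (exp_le_one_add_add_sq (ht i hi hpos)) hpos.le

lemma Finset.log_sum_mul_exp_le (hw : ∀ i ∈ s, 0 ≤ w i) (hw_pos : 0 < ∑ i ∈ s, w i)
    (hw_le : ∑ i ∈ s, w i ≤ 1) (ht : ∀ i ∈ s, 0 < w i → |t i| ≤ 1) :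
    log (∑ i ∈ s, w i * exp (t i)) ≤ ∑ i ∈ s, w i * t i + ∑ i ∈ s, w i * t i ^ 2 := by
  obtain ⟨j, hj, hwj⟩ : ∃ j ∈ s, 0 < w j :=
    exists_lt_of_sum_lt (by simpa using hw_pos)
  have hS_pos : 0 < ∑ i ∈ s, w i * exp (t i) :=
    sum_pos' (fun i hi => mul_nonneg (hw i hi) (exp_pos _).le)
      ⟨j, hj, mul_pos hwj (exp_pos _)⟩
  have := log_le_sub_one_of_pos hS_pos
  have := sum_mul_exp_le hw ht
  linarith

end WeightedSums

theorem stmt_19_general (n : ℕ) (p : Fin n → ℝ)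
    (hp : ∀ i, 0 ≤ p i) (hps_pos : 0 < ∑ i, p i) (hps_le : ∑ i, p i ≤ 1)
    (X : Fin n → ℝ) (l : ℝ) (hl : 0 < l)
    (hX : ∀ i, 0 < p i → |X i| ≤ l) :
    l * Real.log (∑ i, p i * Real.exp (X i / l)) ≤
      ∑ i, p i * X i + (1 / l) * ∑ i, p i * X i ^ 2 := by
  have hXl : ∀ i ∈ univ, 0 < p i → |X i / l| ≤ 1 := fun i _ hi => by
    rw [abs_div, abs_of_pos hl, div_le_one hl]
    exact hX i hi
  calc l * log (∑ i, p i * exp (X i / l))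
      ≤ l * (∑ i, p i * (X i / l) + ∑ i, p i * (X i / l) ^ 2) :=
        mul_le_mul_of_nonneg_left
          (log_sum_mul_exp_le (fun i _ => hp i) hps_pos hps_le hXl) hl.le
    _ = ∑ i, p i * X i + (1 / l) * ∑ i, p i * X i ^ 2 := by
        simp only [mul_add, mul_sum]
        congr 1 <;> refine sum_congr rfl fun i _ => ?_ <;> field_simp

theorem stmt_19 (n : ℕ) (hn : 0 < n) (p : Fin n → ℝ)
    (hp : ∀ i, 0 ≤ p i) (hps_pos : 0 < ∑ i, p i) (hps_le : ∑ i, p i ≤ 1)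
    (X : Fin n → ℝ) (l : ℝ) (hl : 0 < l)
    (hX : ∀ i, 0 < p i → |X i| ≤ l) :
    l * Real.log (∑ i, p i * Real.exp (X i / l)) ≤
      ∑ i, p i * X i + (1 / l) * ∑ i, p i * X i ^ 2 :=
  stmt_19_general n p hp hps_pos hps_le X l hl hX
end
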